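/- arXiv:2006.14764 — 5 statements merged into one kernel-verified Lean document; each statement's English description precedes it below -/
import Mathlib

section
/- Let p be a prime and let B_p ⊆ ℤ_p be the ball of radius p^{−k} centered at a rational r/s ∈ ℚ ∩ ℤ_p, and let B_p⁰ be the ball of radius p^{−k} centered at 0. Suppose ψ : ℝ_{>0} → ℝ_{>0} is monotonically decreasing and for every s > 1 there exists c > 0 such that ψ(s·b) > c·ψ(b) for all sufficiently large b. For a ball B ⊆ ℤ_p let W(ψ,B) = {x ∈ ℝ/ℤ : ‖x − (a/n + ℤ)‖ < ψ(n) for infinitely many rationals a/n ∈ B with gcd(a,n) = 1, n ∈ ℕ}, where ‖·‖ denotes the distance to the nearest integer. Then the Haar probability measures of W(ψ, B_p) and W(ψ, B_p⁰) on ℝ/ℤ are equal. -/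
/-!
Shifting `a/n` by an integer `v`, i.e. `(a, n) ↦ (a + n v, n)`, keeps the fraction reduced and
fixes its image in `ℝ/ℤ`, while moving it by `v` in `ℚ_p`. Since `ℤ` is dense in `ℤ_p`, some such
shift carries the ball about `c` onto the ball about `0`, so the two sets coincide.
-/

open MeasureTheory

/-- The set of `x ∈ ℝ/ℤ` with `‖x - (a/n + ℤ)‖ < ψ(n)` (distance to the nearest integer)
for infinitely many reduced rationals `a/n` lying in the `p`-adic ball of radius `p^{-k}`
centered at the rational `c`. -/
def WCirc (p : ℕ) [Fact p.Prime] (k : ℕ) (c : ℚ) (ψ : ℝ → ℝ) : Set UnitAddCircle :=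
  {x | {q : ℤ × ℕ | 0 < q.2 ∧ Int.gcd q.1 q.2 = 1 ∧
        ‖((q.1 : ℚ_[p]) / (q.2 : ℚ_[p])) - ((c : ℚ) : ℚ_[p])‖ < (p : ℝ) ^ (-(k : ℤ)) ∧
        ‖x - (((q.1 : ℝ) / (q.2 : ℝ)) : UnitAddCircle)‖ < ψ (q.2 : ℝ)}.Infinite}

lemma UnitAddCircle.coe_add_intCast_div (a v : ℤ) {n : ℕ} (hn : n ≠ 0) :
    ((((a + n * v : ℤ) : ℝ) / n : ℝ) : UnitAddCircle) = ((a / n : ℝ) : UnitAddCircle) := by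
  have hsplit : ((a + n * v : ℤ) : ℝ) / n = a / n + v := by
    push_cast
    field_simp
  rw [hsplit, AddCircle.coe_add]
  simp

lemma Padic.exists_intCast_norm_sub_lt {p : ℕ} [Fact p.Prime] {x : ℚ_[p]} (hx : ‖x‖ ≤ 1)
    {ε : ℝ} (hε : 0 < ε) : ∃ v : ℤ, ‖(v : ℚ_[p]) - x‖ < ε := by
  obtain ⟨y, rfl⟩ : ∃ y : ℤ_[p], (y : ℚ_[p]) = x := ⟨⟨x, hx⟩, rfl⟩
  obtain ⟨v, hv⟩ := Metric.denseRange_iff.mp PadicInt.denseRange_intCast y ε hε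
  refine ⟨v, ?_⟩
  rwa [dist_comm, dist_eq_norm, PadicInt.norm_def, PadicInt.coe_sub,
    PadicInt.coe_intCast] at hv

lemma WCirc_subset_of_norm_intCast_sub_lt {p : ℕ} [Fact p.Prime] {k : ℕ} {c₁ c₂ : ℚ} {v : ℤ}
    (hv : ‖(v : ℚ_[p]) - ((c₂ - c₁ : ℚ) : ℚ_[p])‖ < (p : ℝ) ^ (-(k : ℤ))) (ψ : ℝ → ℝ) :
    WCirc p k c₁ ψ ⊆ WCirc p k c₂ ψ := by
  intro x hx
  have hshift_inj : Function.Injective (fun q : ℤ × ℕ ↦ (q.1 + q.2 * v, q.2)) := by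
    rintro ⟨a₁, n₁⟩ ⟨a₂, n₂⟩ h
    simp only [Prod.mk.injEq] at h
    obtain ⟨ha, rfl⟩ := h
    exact Prod.ext (by simpa using ha) rfl
  refine (hx.image hshift_inj.injOn).mono ?_
  rintro _ ⟨⟨a, n⟩, ⟨hn, hgcd, hball, hclose⟩, rfl⟩
  refine ⟨hn, ?_, ?_, ?_⟩
  · rw [← Int.isCoprime_iff_gcd_eq_one] at hgcd ⊢
    exact hgcd.add_mul_left_left v
  · have hn₀ : (n : ℚ_[p]) ≠ 0 := Nat.cast_ne_zero.mpr hn.ne'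
    have hsplit : ((a + n * v : ℤ) : ℚ_[p]) / n - ((c₂ : ℚ) : ℚ_[p])
        = ((a : ℚ_[p]) / n - ((c₁ : ℚ) : ℚ_[p])) + ((v : ℚ_[p]) - ((c₂ - c₁ : ℚ) : ℚ_[p])) := by
      push_cast
      field_simp
      ring
    simp only [hsplit]
    exact (Padic.nonarchimedean _ _).trans_lt (max_lt hball hv)
  · simpa only [UnitAddCircle.coe_add_intCast_div a v hn.ne'] using hclose

lemma WCirc_eq_WCirc_zero {p : ℕ} [Fact p.Prime] (k : ℕ) {c : ℚ} (hc : ‖(c : ℚ_[p])‖ ≤ 1)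
    (ψ : ℝ → ℝ) : WCirc p k c ψ = WCirc p k 0 ψ := by
  have hp : (0 : ℝ) < p := Nat.cast_pos.mpr (Fact.out : p.Prime).pos
  obtain ⟨v, hv⟩ := Padic.exists_intCast_norm_sub_lt hc (zpow_pos hp (-(k : ℤ)))
  refine (WCirc_subset_of_norm_intCast_sub_lt (v := -v) ?_ ψ).antisymm
    (WCirc_subset_of_norm_intCast_sub_lt (by simpa using hv) ψ)
  have hneg : ((-v : ℤ) : ℚ_[p]) - ((0 - c : ℚ) : ℚ_[p]) = -((v : ℚ_[p]) - c) := by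
    push_cast
    ring
  rwa [hneg, norm_neg]

theorem statement9_general (p : ℕ) [Fact p.Prime] (k : ℕ) (c : ℚ)
    (hc : ‖(c : ℚ_[p])‖ ≤ 1) (ψ : ℝ → ℝ) :
    volume (WCirc p k c ψ) = volume (WCirc p k 0 ψ) := by
  rw [WCirc_eq_WCirc_zero k hc ψ]

theorem statement9 (p : ℕ) [Fact p.Prime] (k : ℕ) (c : ℚ)
    (hc : ‖(c : ℚ_[p])‖ ≤ 1) (ψ : ℝ → ℝ)
    (hψpos : ∀ x > (0 : ℝ), 0 < ψ x)
    (hψanti : AntitoneOn ψ (Set.Ioi 0))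
    (hψreg : ∀ s : ℝ, 1 < s → ∃ c' > (0 : ℝ), ∃ N : ℝ, ∀ x ≥ N, c' * ψ x < ψ (s * x)) :
    volume (WCirc p k c ψ) = volume (WCirc p k 0 ψ) :=
  statement9_general p k c hc ψ
end

section
/- Let p be a prime and let B ⊆ ℝ/ℤ be a ball (an open arc of positive length). Suppose ψ : ℝ_{>0} → ℝ_{>0} is monotonically decreasing and for every s > 1 there exists c > 0 such that ψ(s·n) > c·ψ(n) for all sufficiently large n. Let W_p(ψ,B) = {α ∈ ℤ_p : |n·α − a|_p < ψ(max(a, n)) for infinitely many pairs (a,n) ∈ ℕ² with gcd(a,n) = 1, p ∤ n, and a/n + ℤ ∈ B}. Then for every constant c > 0, μ_p(W_p(c·ψ, B)) = μ_p(W_p(ψ, B)). -/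
open MeasureTheory

noncomputable instance (p : ℕ) [Fact p.Prime] : MeasurableSpace ℤ_[p] := borel _
instance (p : ℕ) [Fact p.Prime] : BorelSpace ℤ_[p] := ⟨rfl⟩

/-- The Haar probability measure on the compact additive group `ℤ_[p]`. -/
noncomputable def muP (p : ℕ) [Fact p.Prime] : Measure ℤ_[p] :=
  Measure.addHaarMeasure ⊤

/-- The set of `α ∈ ℤ_[p]` such that `|n·α - a|_p < ψ(max a n)` for infinitely many
coprime pairs `(a,n)` with `p ∤ n` and `a/n + ℤ ∈ B ⊆ ℝ/ℤ`. -/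
def Wp (p : ℕ) [Fact p.Prime] (ψ : ℝ → ℝ) (B : Set UnitAddCircle) : Set ℤ_[p] :=
  {α | {q : ℕ × ℕ | 0 < q.1 ∧ 0 < q.2 ∧ Nat.Coprime q.1 q.2 ∧ ¬ p ∣ q.2 ∧
        (((q.1 : ℝ) / (q.2 : ℝ)) : UnitAddCircle) ∈ B ∧
        ‖(q.2 : ℤ_[p]) * α - (q.1 : ℤ_[p])‖ < ψ ((max q.1 q.2 : ℕ) : ℝ)}.Infinite}

open Metric
open scoped ENNReal NNReal

variable {p : ℕ} [Fact p.Prime]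

instance : (muP p).IsAddLeftInvariant := by unfold muP; infer_instance
instance : IsFiniteMeasure (muP p) := by unfold muP; infer_instance

lemma muP_univ : muP p Set.univ = 1 := by
  have := Measure.addHaarMeasure_self (K₀ := (⊤ : TopologicalSpace.PositiveCompacts ℤ_[p]))
  simpa [muP] using this

lemma muP_closedBall_zero (n : ℕ) :
    muP p (closedBall (0 : ℤ_[p]) ((p : ℝ) ^ (-(n : ℤ)))) = ((p : ℝ≥0∞) ^ n)⁻¹ := by
  set H : Set ℤ_[p] := closedBall (0 : ℤ_[p]) ((p : ℝ) ^ (-(n : ℤ))) with hH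
  have hmem : ∀ z : ℤ_[p], z ∈ H ↔ ‖z‖ ≤ (p : ℝ) ^ (-(n : ℤ)) := by
    intro z; simp [hH, mem_closedBall, dist_eq_norm]
  have hHmeas : MeasurableSet H := measurableSet_closedBall
  set C : ℕ → Set ℤ_[p] := fun j => (fun z : ℤ_[p] => -(j : ℤ_[p]) + z) ⁻¹' H with hC
  have hCmeas : ∀ j, MeasurableSet (C j) := fun j =>
    (measurable_const_add _) hHmeas
  have hCmu : ∀ j, muP p (C j) = muP p H := fun j => measure_preimage_add _ _ _
  have hCmem : ∀ j (z : ℤ_[p]), z ∈ C j ↔ ‖z - (j : ℤ_[p])‖ ≤ (p : ℝ) ^ (-(n : ℤ)) := by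
    intro j z
    rw [hC]; simp only [Set.mem_preimage, hmem]
    rw [neg_add_eq_sub]
  have hcover : (⋃ j ∈ Finset.range (p ^ n), C j) = Set.univ := by
    ext z
    simp only [Set.mem_iUnion, Set.mem_univ, iff_true]
    refine ⟨z.appr n, Finset.mem_range.2 (z.appr_lt n), ?_⟩
    rw [hCmem]
    rw [PadicInt.norm_le_pow_iff_mem_span_pow]
    exact z.appr_spec n
  have hdisj : (Finset.range (p ^ n) : Set ℕ).PairwiseDisjoint C := by
    intro j hj k hk hjk
    refine Set.disjoint_left.2 fun z hzj hzk => hjk ?_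
    rw [hCmem] at hzj hzk
    have : ‖(j : ℤ_[p]) - (k : ℤ_[p])‖ ≤ (p : ℝ) ^ (-(n : ℤ)) := by
      have heq : (j : ℤ_[p]) - (k : ℤ_[p]) = (z - (k : ℤ_[p])) + -(z - (j : ℤ_[p])) := by ring
      rw [heq]
      have h0 := PadicInt.nonarchimedean (z - (k : ℤ_[p])) (-(z - (j : ℤ_[p])))
      rw [norm_neg] at h0
      exact le_trans h0 (max_le hzk hzj)
    have hdvd : (p : ℤ) ^ n ∣ (j : ℤ) - (k : ℤ) := by
      rw [← PadicInt.norm_int_le_pow_iff_dvd]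
      push_cast
      push_cast at this
      exact this
    have hj' := Finset.mem_range.1 (by exact_mod_cast hj)
    have hk' := Finset.mem_range.1 (by exact_mod_cast hk)
    have hj'' : (j : ℤ) < (p : ℤ) ^ n := by exact_mod_cast hj'
    have hk'' : (k : ℤ) < (p : ℤ) ^ n := by exact_mod_cast hk'
    have habs : |(j : ℤ) - (k : ℤ)| < (p : ℤ) ^ n := by
      rw [abs_lt]; omega
    have := Int.eq_zero_of_abs_lt_dvd hdvd habs
    omega
  have hsum : muP p Set.univ = ∑ j ∈ Finset.range (p ^ n), muP p (C j) := by
    rw [← hcover]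
    exact (measure_biUnion_finset hdisj fun j _ => hCmeas j)
  rw [muP_univ] at hsum
  have hsum' : (1 : ℝ≥0∞) = (p ^ n : ℕ) * muP p H := by
    rw [hsum]
    simp [hCmu, Finset.sum_const, nsmul_eq_mul]
  have hp0 : ((p : ℝ≥0∞) ^ n) ≠ 0 := by
    have : (p : ℝ≥0∞) ≠ 0 := by
      exact_mod_cast Nat.cast_ne_zero.2 (Fact.out : p.Prime).pos.ne'
    exact pow_ne_zero n this
  have hptop : ((p : ℝ≥0∞) ^ n) ≠ ⊤ := by
    exact ENNReal.pow_ne_top (by exact_mod_cast ENNReal.natCast_ne_top p)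
  have : muP p H = 1 / ((p : ℝ≥0∞) ^ n) := by
    rw [ENNReal.eq_div_iff hp0 hptop]
    rw [hsum']; push_cast; ring
  rw [this, one_div]

lemma muP_closedBall (x : ℤ_[p]) (n : ℕ) :
    muP p (closedBall x ((p : ℝ) ^ (-(n : ℤ)))) = ((p : ℝ≥0∞) ^ n)⁻¹ := by
  have : closedBall x ((p : ℝ) ^ (-(n : ℤ)))
      = (fun z : ℤ_[p] => -x + z) ⁻¹' closedBall (0 : ℤ_[p]) ((p : ℝ) ^ (-(n : ℤ))) := by
    ext z
    simp [mem_closedBall, dist_eq_norm, neg_add_eq_sub]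
  rw [this, measure_preimage_add, muP_closedBall_zero]

lemma hp_one_lt : (1 : ℝ) < (p : ℝ) := by
  exact_mod_cast (Fact.out : p.Prime).one_lt

instance : IsUnifLocDoublingMeasure (muP p) := by
  refine ⟨⟨(p : ℝ≥0) ^ 2, ?_⟩⟩
  have hmem : Set.Ioo (0 : ℝ) 1 ∈ nhdsWithin (0 : ℝ) (Set.Ioi 0) :=
    Ioo_mem_nhdsGT_of_mem (by norm_num)
  filter_upwards [hmem] with ε hε x
  obtain ⟨hε0, hε1⟩ := hε
  obtain ⟨m, hm1, hm2⟩ := exists_mem_Ico_zpow hε0 (hp_one_lt (p := p))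
  have hp1 : (1 : ℝ) < (p : ℝ) := hp_one_lt
  have hp0 : (0 : ℝ) < (p : ℝ) := lt_trans one_pos hp1
  -- m < 0
  have hmneg : m < 0 := by
    by_contra h
    push_neg at h
    have : (1 : ℝ) ≤ (p : ℝ) ^ m := one_le_zpow₀ (le_of_lt hp1) h
    linarith
  set n : ℕ := (-m).toNat with hn
  have hmn : m = -(n : ℤ) := by omega
  have hn1 : 1 ≤ n := by omega
  -- lower bound for closedBall ε
  have hlow : ((p : ℝ≥0∞) ^ n)⁻¹ ≤ muP p (closedBall x ε) := by
    rw [← muP_closedBall x n]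
    apply measure_mono
    apply closedBall_subset_closedBall
    rw [← hmn]; exact hm1
  -- upper bound for closedBall (2 ε)
  have hup : muP p (closedBall x (2 * ε)) ≤ (p : ℝ≥0∞) ^ 2 * ((p : ℝ≥0∞) ^ n)⁻¹ := by
    have hple : (2 : ℝ) ≤ (p : ℝ) := by exact_mod_cast (Fact.out : p.Prime).two_le
    have h2ε : 2 * ε ≤ (p : ℝ) ^ (m + 2) := by
      have : 2 * ε < 2 * (p : ℝ) ^ (m + 1) := by linarith
      have h2 : 2 * (p : ℝ) ^ (m + 1) ≤ (p : ℝ) ^ (m + 2) := by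
        have : (p : ℝ) ^ (m + 2) = (p : ℝ) ^ (m + 1) * (p : ℝ) := by
          rw [← zpow_add_one₀ (ne_of_gt hp0)]; ring_nf
        rw [this]
        nlinarith [zpow_pos hp0 (m + 1)]
      linarith
    by_cases hc : 2 ≤ n
    · have hmn2 : m + 2 = -((n - 2 : ℕ) : ℤ) := by omega
      have : muP p (closedBall x (2 * ε)) ≤ muP p (closedBall x ((p : ℝ) ^ (-(((n - 2 : ℕ)) : ℤ)))) := by
        apply measure_mono
        apply closedBall_subset_closedBall
        rw [← hmn2]; exact h2ε
      rw [muP_closedBall] at this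
      refine le_trans this ?_
      have hpe : ((p : ℝ≥0∞) ^ n) = (p : ℝ≥0∞) ^ 2 * (p : ℝ≥0∞) ^ (n - 2 : ℕ) := by
        rw [← pow_add]; congr 1; omega
      rw [hpe, ENNReal.mul_inv (Or.inl (by simp [(Fact.out : p.Prime).pos.ne'])) (Or.inl (ENNReal.pow_ne_top (ENNReal.natCast_ne_top p)))]
      rw [← mul_assoc]
      have hcancel : (p : ℝ≥0∞) ^ 2 * ((p : ℝ≥0∞) ^ 2)⁻¹ = 1 := by
        apply ENNReal.mul_inv_cancel
        · simp [(Fact.out : p.Prime).pos.ne']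
        · exact ENNReal.pow_ne_top (ENNReal.natCast_ne_top p)
      rw [hcancel, one_mul]
    · -- n = 1
      have hn1' : n = 1 := by omega
      have h1 : muP p (closedBall x (2 * ε)) ≤ 1 := by
        rw [← muP_univ (p := p)]
        exact measure_mono (Set.subset_univ _)
      refine le_trans h1 ?_
      rw [hn1', pow_one]
      have hppos : (p : ℝ≥0∞) ≠ 0 := by simp [(Fact.out : p.Prime).pos.ne']
      have hptop : (p : ℝ≥0∞) ≠ ⊤ := ENNReal.natCast_ne_top p
      have heq : (p : ℝ≥0∞) ^ 2 * ((p : ℝ≥0∞))⁻¹ = p := by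
        rw [sq, mul_assoc, ENNReal.mul_inv_cancel hppos hptop, mul_one]
      rw [heq]
      exact_mod_cast Nat.one_le_cast.2 (Fact.out : p.Prime).one_lt.le
  calc muP p (closedBall x (2 * ε)) ≤ (p : ℝ≥0∞) ^ 2 * ((p : ℝ≥0∞) ^ n)⁻¹ := hup
    _ ≤ ((p : ℝ≥0∞) ^ 2) * muP p (closedBall x ε) := by
        exact mul_le_mul_right hlow _
    _ = ((p ^ 2 : ℝ≥0) : ℝ≥0∞) * muP p (closedBall x ε) := by push_cast; ring_nf

/-- The center `a/n` as an element of `ℤ_[p]`. -/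
noncomputable def ctr (p : ℕ) [Fact p.Prime] (q : ℕ × ℕ) : ℤ_[p] :=
  (q.1 : ℤ_[p]) * Ring.inverse (q.2 : ℤ_[p])

lemma norm_nat_eq_one {n : ℕ} (hn : ¬ p ∣ n) : ‖(n : ℤ_[p])‖ = 1 := by
  have h1 : ¬ ((p : ℤ) ∣ (n : ℤ)) := by exact_mod_cast hn
  have h2 : ¬ (‖((n : ℤ) : ℤ_[p])‖ < 1) := fun h => h1 ((PadicInt.norm_int_lt_one_iff_dvd _).1 h)
  have h3 : ‖((n : ℤ) : ℤ_[p])‖ ≤ 1 := PadicInt.norm_le_one _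
  have : ((n : ℤ) : ℤ_[p]) = (n : ℤ_[p]) := by push_cast; ring
  rw [this] at h2 h3
  linarith [lt_or_ge ‖(n : ℤ_[p])‖ 1]

lemma dist_ctr_eq {q : ℕ × ℕ} (hn : ¬ p ∣ q.2) (α : ℤ_[p]) :
    ‖(q.2 : ℤ_[p]) * α - (q.1 : ℤ_[p])‖ = dist α (ctr p q) := by
  have hU : IsUnit (q.2 : ℤ_[p]) := PadicInt.isUnit_iff.2 (norm_nat_eq_one hn)
  have hmul : (q.2 : ℤ_[p]) * ctr p q = (q.1 : ℤ_[p]) := by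
    rw [ctr, mul_comm (q.1 : ℤ_[p]), ← mul_assoc, Ring.mul_inverse_cancel _ hU, one_mul]
  have : (q.2 : ℤ_[p]) * α - (q.1 : ℤ_[p]) = (q.2 : ℤ_[p]) * (α - ctr p q) := by
    rw [mul_sub, hmul]
  rw [this, norm_mul, norm_nat_eq_one hn, one_mul, dist_eq_norm]

/-- Membership in a `blimsup` of sets over `atTop`. -/
lemma mem_blimsup_iff {X : Type*} (s : ℕ → Set X) (P : ℕ → Prop) (x : X) :
    x ∈ Filter.blimsup s Filter.atTop P ↔ ∃ᶠ i in Filter.atTop, P i ∧ x ∈ s i := by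
  rw [Filter.blimsup_eq_iInf_biSup_of_nat]
  simp only [Set.iInf_eq_iInter, Set.iSup_eq_iUnion, Set.mem_iInter, Set.mem_iUnion,
    Filter.frequently_atTop]
  constructor
  · intro h i
    obtain ⟨j, ⟨hPj, hij⟩, hxj⟩ := h i
    exact ⟨j, hij, hPj, hxj⟩
  · intro h i
    obtain ⟨j, hij, hPj, hxj⟩ := h i
    exact ⟨j, ⟨hPj, hij⟩, hxj⟩

/-- enumeration of pairs -/
noncomputable def enu : ℕ ≃ ℕ × ℕ := (Denumerable.eqv (ℕ × ℕ)).symm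

def Pred (p : ℕ) (B : Set UnitAddCircle) (i : ℕ) : Prop :=
  0 < (enu i).1 ∧ 0 < (enu i).2 ∧ Nat.Coprime (enu i).1 (enu i).2 ∧ ¬ p ∣ (enu i).2 ∧
    ((((enu i).1 : ℝ) / ((enu i).2 : ℝ)) : UnitAddCircle) ∈ B

noncomputable def rad (ψ : ℝ → ℝ) (i : ℕ) : ℝ :=
  ψ ((max 1 (max (enu i).1 (enu i).2) : ℕ) : ℝ)

lemma infinite_iff_enu {S : Set (ℕ × ℕ)} : S.Infinite ↔ {i : ℕ | enu i ∈ S}.Infinite := by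
  constructor
  · intro h
    exact h.preimage (by rw [Equiv.range_eq_univ]; exact Set.subset_univ _)
  · intro h
    have : S = enu '' {i : ℕ | enu i ∈ S} := by
      ext q
      constructor
      · intro hq; exact ⟨enu.symm q, by simpa using hq, by simp⟩
      · rintro ⟨i, hi, rfl⟩; exact hi
    rw [this]
    exact h.image (enu.injective.injOn)

lemma Wp_eq_blimsup (ψ : ℝ → ℝ) (B : Set UnitAddCircle) :
    Wp p ψ B = Filter.blimsup (fun i => Metric.thickening (rad ψ i) {ctr p (enu i)})
      Filter.atTop (Pred p B) := by
  ext α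
  rw [mem_blimsup_iff, Filter.frequently_atTop]
  simp only [Wp, Set.mem_setOf_eq]
  rw [infinite_iff_enu, ← Nat.frequently_atTop_iff_infinite, Filter.frequently_atTop]
  simp only [Set.mem_setOf_eq]
  apply forall_congr'
  intro i
  apply exists_congr
  intro j
  apply and_congr_right'
  constructor
  · rintro ⟨h1, h2, h3, h4, h5, h6⟩
    refine ⟨⟨h1, h2, h3, h4, h5⟩, ?_⟩
    rw [Metric.thickening_singleton, Metric.mem_ball]
    rw [← dist_ctr_eq h4]
    rw [rad]
    have : max 1 (max (enu j).1 (enu j).2) = max (enu j).1 (enu j).2 := by omega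
    rw [this]
    exact h6
  · rintro ⟨⟨h1, h2, h3, h4, h5⟩, h6⟩
    refine ⟨h1, h2, h3, h4, h5, ?_⟩
    rw [Metric.thickening_singleton, Metric.mem_ball, ← dist_ctr_eq h4, rad] at h6
    have : max 1 (max (enu j).1 (enu j).2) = max (enu j).1 (enu j).2 := by omega
    rw [this] at h6
    exact h6

lemma rad_tendsto {ψ : ℝ → ℝ} (hψpos : ∀ x > (0 : ℝ), 0 < ψ x)
    (hψanti : AntitoneOn ψ (Set.Ioi 0))
    (h0 : ∀ ε > (0 : ℝ), ∃ x ≥ (1 : ℝ), ψ x < ε) :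
    Filter.Tendsto (rad ψ) Filter.atTop (nhds 0) := by
  rw [NormedAddCommGroup.tendsto_nhds_zero]
  intro ε hε
  obtain ⟨x₀, hx₀1, hx₀⟩ := h0 ε hε
  set M : ℕ := ⌈x₀⌉₊ with hM
  rw [← Nat.cofinite_eq_atTop, Filter.eventually_cofinite]
  have hsub : {i : ℕ | ¬ ‖rad ψ i‖ < ε} ⊆ enu ⁻¹' {q : ℕ × ℕ | q.1 ≤ M ∧ q.2 ≤ M} := by
    intro i hi
    simp only [Set.mem_setOf_eq, not_lt] at hi
    by_contra hc
    simp only [Set.mem_preimage, Set.mem_setOf_eq, not_and_or, not_le] at hc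
    have hgt : M < max 1 (max (enu i).1 (enu i).2) := by
      rcases hc with h | h <;> omega
    have hge : x₀ ≤ ((max 1 (max (enu i).1 (enu i).2) : ℕ) : ℝ) := by
      have h1 : x₀ ≤ (M : ℝ) + 1 := by
        have := Nat.le_ceil x₀
        push_cast
        linarith
      have h2 : (M : ℝ) + 1 ≤ ((max 1 (max (enu i).1 (enu i).2) : ℕ) : ℝ) := by
        exact_mod_cast hgt
      linarith
    have hpos0 : (0 : ℝ) < ((max 1 (max (enu i).1 (enu i).2) : ℕ) : ℝ) := by
      have : (1 : ℕ) ≤ max 1 (max (enu i).1 (enu i).2) := le_max_left _ _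
      exact_mod_cast Nat.lt_of_lt_of_le Nat.zero_lt_one this
    have hlt : ψ ((max 1 (max (enu i).1 (enu i).2) : ℕ) : ℝ) ≤ ψ x₀ := by
      apply hψanti (Set.mem_Ioi.2 (by linarith)) (Set.mem_Ioi.2 hpos0) hge
    have hposv : 0 < rad ψ i := hψpos _ hpos0
    rw [rad] at *
    rw [Real.norm_eq_abs, abs_of_pos hposv] at hi
    linarith
  apply Set.Finite.subset _ hsub
  apply Set.Finite.preimage enu.injective.injOn
  apply Set.Finite.subset (Set.Finite.prod (Set.finite_Iic M) (Set.finite_Iic M))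
  rintro ⟨a, b⟩ ⟨h1, h2⟩
  exact ⟨h1, h2⟩

lemma case_tendsto {ψ : ℝ → ℝ} (hψpos : ∀ x > (0 : ℝ), 0 < ψ x)
    (hψanti : AntitoneOn ψ (Set.Ioi 0))
    (h0 : ∀ ε > (0 : ℝ), ∃ x ≥ (1 : ℝ), ψ x < ε)
    (B : Set UnitAddCircle) {c : ℝ} (hc : 0 < c) :
    muP p (Wp p (fun x => c * ψ x) B) = muP p (Wp p ψ B) := by
  rw [Wp_eq_blimsup, Wp_eq_blimsup]
  have hr : rad (fun x => c * ψ x) = fun i => c * rad ψ i := rfl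
  rw [hr]
  exact measure_congr
    (blimsup_thickening_mul_ae_eq (muP p) (Pred p B) (fun i => {ctr p (enu i)}) hc
      (rad ψ) (rad_tendsto hψpos hψanti h0))

lemma coe_sub_circle (s t : ℝ) :
    ((s - t : ℝ) : UnitAddCircle) = ((s : ℝ) : UnitAddCircle) - ((t : ℝ) : UnitAddCircle) := by
  exact_mod_cast QuotientAddGroup.mk_sub _ s t

lemma int_coe_eq_zero (t : ℤ) : (((t : ℝ)) : UnitAddCircle) = 0 := by
  rw [AddCircle.coe_eq_zero_iff]
  exact ⟨t, by simp⟩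

lemma coe_circle_eq_of_int_diff {s t : ℝ} (m : ℤ) (h : s - t = (m : ℝ)) :
    ((s : ℝ) : UnitAddCircle) = ((t : ℝ) : UnitAddCircle) := by
  have h1 : ((s : ℝ) : UnitAddCircle) - ((t : ℝ) : UnitAddCircle) = 0 := by
    rw [← coe_sub_circle, h]; exact int_coe_eq_zero m
  have := sub_eq_zero.1 h1
  exact this

lemma dist_coe_le (s t : ℝ) :
    dist ((s : ℝ) : UnitAddCircle) ((t : ℝ) : UnitAddCircle) ≤ |s - t| := by
  rw [dist_eq_norm, ← coe_sub_circle, UnitAddCircle.norm_eq]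
  simpa using round_le (s - t) 0

lemma exists_frac_mem_ball (x : UnitAddCircle) {r₀ : ℝ} (hr : 0 < r₀) {n : ℕ}
    (hn2 : 2 ≤ n) (hnr : 2 / (n : ℝ) < r₀) :
    ∃ u : ℕ, 0 < u ∧ u < n ∧ (((u : ℝ) / (n : ℝ)) : UnitAddCircle) ∈ Metric.ball x r₀ := by
  have hn0 : (0 : ℝ) < n := by exact_mod_cast Nat.lt_of_lt_of_le Nat.zero_lt_two hn2
  obtain ⟨y₀, rfl⟩ : ∃ y₀ : ℝ, ((y₀ : ℝ) : UnitAddCircle) = x := by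
    induction x using QuotientAddGroup.induction_on with
    | H z => exact ⟨z, rfl⟩
  set y : ℝ := Int.fract y₀ with hyd
  have hyx : ((y : ℝ) : UnitAddCircle) = ((y₀ : ℝ) : UnitAddCircle) :=
    coe_circle_eq_of_int_diff (-⌊y₀⌋) (by rw [hyd, Int.fract]; push_cast; ring)
  have hy0 : 0 ≤ y := Int.fract_nonneg y₀
  have hy1 : y < 1 := Int.fract_lt_one y₀
  -- helper
  have key : ∀ (u : ℕ) (y' : ℝ), 0 < u → u < n → ((y' : ℝ) : UnitAddCircle) = ((y₀ : ℝ) : UnitAddCircle) →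
      |(u : ℝ) - (n : ℝ) * y'| ≤ 2 →
      (((u : ℝ) / (n : ℝ)) : UnitAddCircle) ∈ Metric.ball ((y₀ : ℝ) : UnitAddCircle) r₀ := by
    intro u y' hu0 hun hy' habs
    rw [Metric.mem_ball, ← hy']
    have hdd : (u : ℝ) / (n : ℝ) - y' = ((u : ℝ) - (n : ℝ) * y') / (n : ℝ) := by
      field_simp
    calc dist (((u : ℝ) / (n : ℝ) : ℝ) : UnitAddCircle) ((y' : ℝ) : UnitAddCircle)
        ≤ |(u : ℝ) / (n : ℝ) - y'| := dist_coe_le _ _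
      _ = |(u : ℝ) - (n : ℝ) * y'| / (n : ℝ) := by
          rw [hdd, abs_div, abs_of_pos hn0]
      _ ≤ 2 / (n : ℝ) := by gcongr
      _ < r₀ := hnr
  set j : ℕ := ⌊(n : ℝ) * y⌋.toNat with hj
  have h0 : (0 : ℤ) ≤ ⌊(n : ℝ) * y⌋ := Int.floor_nonneg.2 (by positivity)
  have hjy : (j : ℝ) ≤ (n : ℝ) * y := by
    rw [hj]
    have := Int.floor_le ((n : ℝ) * y)
    rw [show (((⌊(n : ℝ) * y⌋.toNat : ℕ) : ℝ)) = ((⌊(n : ℝ) * y⌋ : ℤ) : ℝ) by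
      exact_mod_cast congrArg (fun z : ℤ => (z : ℝ)) (Int.toNat_of_nonneg h0)]
    exact this
  have hjy2 : (n : ℝ) * y < (j : ℝ) + 1 := by
    rw [hj]
    have := Int.lt_floor_add_one ((n : ℝ) * y)
    rw [show (((⌊(n : ℝ) * y⌋.toNat : ℕ) : ℝ)) = ((⌊(n : ℝ) * y⌋ : ℤ) : ℝ) by
      exact_mod_cast congrArg (fun z : ℤ => (z : ℝ)) (Int.toNat_of_nonneg h0)]
    exact this
  have hjn : j + 1 ≤ n := by
    by_contra hcon
    push_neg at hcon
    have : (n : ℝ) ≤ (j : ℝ) := by exact_mod_cast Nat.lt_succ_iff.1 hcon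
    nlinarith
  by_cases hcase : j + 1 < n
  · refine ⟨j + 1, Nat.succ_pos j, hcase, key (j + 1) y (Nat.succ_pos j) hcase hyx ?_⟩
    have hc : ((j + 1 : ℕ) : ℝ) = (j : ℝ) + 1 := by push_cast; ring
    rw [hc, abs_le]
    constructor <;> nlinarith
  · have hjeq : (j : ℝ) + 1 = (n : ℝ) := by
      have h' : j + 1 = n := by omega
      exact_mod_cast congrArg (fun k : ℕ => (k : ℝ)) h'
    refine ⟨1, Nat.one_pos, by omega, key 1 (y - 1) Nat.one_pos (by omega)
      (coe_circle_eq_of_int_diff (-1) (by push_cast; ring) |>.trans hyx) ?_⟩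
    rw [abs_le]
    push_cast
    constructor <;> nlinarith

lemma Wp_univ {ψ' : ℝ → ℝ} {ε : ℝ} (hε : 0 < ε) (hψ' : ∀ x ≥ (1 : ℝ), ε ≤ ψ' x)
    (x₀ : UnitAddCircle) {r₀ : ℝ} (hr₀ : 0 < r₀) :
    Wp p ψ' (Metric.ball x₀ r₀) = Set.univ := by
  ext α
  simp only [Wp, Set.mem_setOf_eq, Set.mem_univ, iff_true]
  obtain ⟨k, hk⟩ := exists_pow_lt_of_lt_one hε
    (show (p : ℝ)⁻¹ < 1 by
      rw [inv_lt_one_iff₀]; right; exact hp_one_lt)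
  have hk' : ((p : ℝ)) ^ (-(k : ℤ)) < ε := by
    rw [zpow_neg, zpow_natCast, ← inv_pow]; exact hk
  set S : Set (ℕ × ℕ) := {q : ℕ × ℕ | 0 < q.1 ∧ 0 < q.2 ∧ Nat.Coprime q.1 q.2 ∧ ¬ p ∣ q.2 ∧
        (((q.1 : ℝ) / (q.2 : ℝ)) : UnitAddCircle) ∈ Metric.ball x₀ r₀ ∧
        ‖(q.2 : ℤ_[p]) * α - (q.1 : ℤ_[p])‖ < ψ' ((max q.1 q.2 : ℕ) : ℝ)} with hS
  have claim : ∀ m : ℕ, ∃ q ∈ S, m < q.2 := by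
    intro m
    set N₀ : ℕ := ⌈2 / r₀⌉₊ + 1 with hN₀d
    obtain ⟨n, hnge, hnp⟩ := Nat.exists_infinite_primes (max (max (m + 1) (p + 1)) (max 2 N₀))
    have hnm : m < n := by
      have := le_trans (le_max_left _ _) (le_trans (le_max_left _ _) hnge); omega
    have hppn : p + 1 ≤ n := le_trans (le_max_right _ _) (le_trans (le_max_left _ _) hnge)
    have hn2 : 2 ≤ n := le_trans (le_max_left _ _) (le_trans (le_max_right _ _) hnge)
    have hnN₀ : N₀ ≤ n := le_trans (le_max_right _ _) (le_trans (le_max_right _ _) hnge)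
    have hn0 : 0 < n := by omega
    have hn0' : (0 : ℝ) < n := by exact_mod_cast hn0
    have hpn : ¬ p ∣ n := by
      intro hd
      have := (Nat.prime_dvd_prime_iff_eq (Fact.out : p.Prime) hnp).1 hd
      omega
    have hnr : 2 / (n : ℝ) < r₀ := by
      have h1 : 2 / r₀ < (N₀ : ℝ) := by
        have := Nat.le_ceil (2 / r₀)
        have h2 : ((⌈2 / r₀⌉₊ : ℕ) : ℝ) < (N₀ : ℝ) := by
          rw [hN₀d]; push_cast; linarith
        linarith
      have h2 : (N₀ : ℝ) ≤ (n : ℝ) := by exact_mod_cast hnN₀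
      rw [div_lt_iff₀ hn0']
      have := (div_lt_iff₀ hr₀).1 (lt_of_lt_of_le h1 h2)
      linarith
    obtain ⟨u, hu0, hun, humem⟩ := exists_frac_mem_ball x₀ hr₀ hn2 hnr
    set rr : ℕ := ((n : ℤ_[p]) * α).appr k with hrr
    have hco : (p ^ k).Coprime n :=
      Nat.Coprime.pow_left k (((Fact.out : p.Prime).coprime_iff_not_dvd).2 hpn)
    obtain ⟨a, har, hau⟩ := Nat.chineseRemainder hco rr u
    have hmodu : (a : ℕ) % n = u % n := hau
    have humod : u % n = u := Nat.mod_eq_of_lt hun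
    have hna : ¬ n ∣ (a : ℕ) := by
      intro hd
      have : (a : ℕ) % n = 0 := Nat.eq_zero_of_dvd_of_lt hd |> fun _ => Nat.mod_eq_zero_of_dvd hd
      omega
    have ha0 : 0 < (a : ℕ) := by
      rcases Nat.eq_zero_or_pos (a : ℕ) with h | h
      · exact absurd (h ▸ dvd_zero n) hna
      · exact h
    refine ⟨((a : ℕ), n), ⟨ha0, hn0, ?_, hpn, ?_, ?_⟩, hnm⟩
    · exact Nat.coprime_comm.1 ((hnp.coprime_iff_not_dvd).2 hna)
    · -- membership in ball
      have hdvd : (n : ℤ) ∣ (u : ℤ) - ((a : ℕ) : ℤ) := hau.dvd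
      obtain ⟨t, ht⟩ := hdvd
      have heq : ((a : ℕ) : ℝ) / (n : ℝ) - (u : ℝ) / (n : ℝ) = ((-t : ℤ) : ℝ) := by
        have ht' : (u : ℝ) - ((a : ℕ) : ℝ) = (n : ℝ) * (t : ℝ) := by exact_mod_cast ht
        push_cast
        field_simp
        linarith [ht']
      rw [coe_circle_eq_of_int_diff (-t) heq]
      exact humem
    · -- norm bound
      have h1 : ‖(n : ℤ_[p]) * α - (rr : ℤ_[p])‖ ≤ (p : ℝ) ^ (-(k : ℤ)) :=
        (PadicInt.norm_le_pow_iff_mem_span_pow _ k).2 (PadicInt.appr_spec k _)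
      have hdvd2 : (p : ℤ) ^ k ∣ (rr : ℤ) - ((a : ℕ) : ℤ) := by
        have := har.dvd
        push_cast at this ⊢
        exact this
      have h2 : ‖(rr : ℤ_[p]) - ((a : ℕ) : ℤ_[p])‖ ≤ (p : ℝ) ^ (-(k : ℤ)) := by
        have := (PadicInt.norm_int_le_pow_iff_dvd (k := (rr : ℤ) - ((a : ℕ) : ℤ)) (n := k)).2 hdvd2
        have hcast : (((rr : ℤ) - ((a : ℕ) : ℤ) : ℤ) : ℤ_[p]) = (rr : ℤ_[p]) - ((a : ℕ) : ℤ_[p]) := by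
          push_cast; ring
        rw [hcast] at this
        exact this
      have hsplit : (n : ℤ_[p]) * α - ((a : ℕ) : ℤ_[p])
          = ((n : ℤ_[p]) * α - (rr : ℤ_[p])) + ((rr : ℤ_[p]) - ((a : ℕ) : ℤ_[p])) := by ring
      have hnorm : ‖(n : ℤ_[p]) * α - ((a : ℕ) : ℤ_[p])‖ ≤ (p : ℝ) ^ (-(k : ℤ)) := by
        rw [hsplit]
        exact le_trans (PadicInt.nonarchimedean _ _) (max_le h1 h2)
      have hmax1 : (1 : ℝ) ≤ ((max (a : ℕ) n : ℕ) : ℝ) := by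
        have : 1 ≤ max (a : ℕ) n := le_trans hn0 (le_max_right _ _)
        exact_mod_cast this
      calc ‖(n : ℤ_[p]) * α - ((a : ℕ) : ℤ_[p])‖ ≤ (p : ℝ) ^ (-(k : ℤ)) := hnorm
        _ < ε := hk'
        _ ≤ ψ' ((max (a : ℕ) n : ℕ) : ℝ) := hψ' _ hmax1
  by_contra hfin
  rw [Set.not_infinite] at hfin
  obtain ⟨b, hb⟩ := (hfin.image Prod.snd).bddAbove
  obtain ⟨q, hqS, hq2⟩ := claim b
  exact absurd (hb (Set.mem_image_of_mem Prod.snd hqS)) (by omega)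

theorem statement12 (p : ℕ) [Fact p.Prime] (ψ : ℝ → ℝ)
    (hψpos : ∀ x > (0 : ℝ), 0 < ψ x)
    (hψanti : AntitoneOn ψ (Set.Ioi 0))
    (hψreg : ∀ s : ℝ, 1 < s → ∃ c' > (0 : ℝ), ∃ N : ℝ, ∀ x ≥ N, c' * ψ x < ψ (s * x))
    (B : Set UnitAddCircle) (hB : ∃ x r, 0 < r ∧ B = Metric.ball x r) :
    ∀ c : ℝ, 0 < c → muP p (Wp p (fun x => c * ψ x) B) = muP p (Wp p ψ B) := by
  intro c hc
  by_cases h0 : ∀ ε > (0 : ℝ), ∃ x ≥ (1 : ℝ), ψ x < ε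
  · exact case_tendsto hψpos hψanti h0 B hc
  · push_neg at h0
    obtain ⟨ε, hε, hbig⟩ := h0
    obtain ⟨x₀, r₀, hr₀, rfl⟩ := hB
    rw [Wp_univ (mul_pos hc hε) (fun x hx => mul_le_mul_of_nonneg_left (hbig x hx) hc.le) x₀ hr₀,
      Wp_univ hε hbig x₀ hr₀]
end

section
/- Let p be a prime and let B ⊆ ℝ/ℤ be a ball (an open arc of positive length). For n ∈ ℕ, let φ^B(n) = #{a ∈ ℕ : 1 ≤ a ≤ n, gcd(a,n) = 1, and a/n (viewed in [0,1]) is a representative of a point of B}. Then there exist N₀ ∈ ℕ and a constant C > 0 such that for all N ≥ N₀, Σ_{1 ≤ n ≤ N, p ∤ n} φ^B(n) ≥ C·N². -/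
/-!
The ball contains the image of an interval `(α, β) ⊆ [0, 1]`, so `φ^B(n)` is at least the
number of integers `a ∈ (α n, β n)` coprime to `n`. Writing `c(m)` for the number of integers
in `(α m, β m)`, the integers of `(α n, β n)` divisible by a prime `q ∣ n` are `q` times those
of `(α (n/q), β (n/q))`, so sieving by the primes of `n` gives
`φ^B(n) ≥ c(n) - ∑_{q ∣ n} c(n/q)` with `c(m) = (β - α) m + O(1)`.
Summing over the odd `n ≤ N` not divisible by `p`, the main term is about `(β - α) N² / 6`.
Since only odd `q` occur, the sieved part is at most
`∑_{q ≥ 3 odd} ∑_{m ≤ N/q} c(m) ≤ (β - α) N² / 2 · ∑_{q ≥ 3 odd} q⁻² + O(N^{3/2})`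
with `∑_{q ≥ 3 odd} q⁻² ≤ 1/4`, leaving `(β - α) N² / 24 - O(N^{3/2})`.
-/

/-- `φ^B(n)`: the number of `a` with `1 ≤ a ≤ n`, `gcd(a,n) = 1`, whose class
`a/n + ℤ` lies in `B ⊆ ℝ/ℤ`. -/
noncomputable def phiB (B : Set UnitAddCircle) (n : ℕ) : ℕ :=
  Set.ncard {a : ℕ | 1 ≤ a ∧ a ≤ n ∧ Nat.Coprime a n ∧
    (((a : ℝ) / (n : ℝ)) : UnitAddCircle) ∈ B}

open Finset

lemma exists_Ioo_forall_coe_mem_ball (x : UnitAddCircle) {r : ℝ} (hr : 0 < r) :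
    ∃ α β : ℝ, 0 ≤ α ∧ α < β ∧ β ≤ 1 ∧
      ∀ t ∈ Set.Ioo α β, (t : UnitAddCircle) ∈ Metric.ball x r := by
  obtain ⟨y, rfl⟩ := QuotientAddGroup.mk_surjective x
  have h₀ := Int.fract_nonneg y
  have h₁ := Int.fract_lt_one y
  refine ⟨max 0 (Int.fract y - r), min 1 (Int.fract y + r), le_max_left _ _,
    max_lt (lt_min one_pos (by linarith)) (lt_min (by linarith) (by linarith)),
    min_le_left _ _, fun t ⟨ht₁, ht₂⟩ ↦ ?_⟩
  rw [max_lt_iff] at ht₁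
  rw [lt_min_iff] at ht₂
  rw [Metric.mem_ball, ← AddCircle.coe_fract y, dist_eq_norm, ← AddCircle.coe_sub]
  refine QuotientAddGroup.norm_mk_le_norm.trans_lt ?_
  rw [Real.norm_eq_abs, abs_sub_lt_iff]
  constructor <;> linarith

lemma mem_Ioo_floor_ceil {x y : ℝ} (hx : 0 ≤ x) {a : ℕ} :
    a ∈ Ioo ⌊x⌋₊ ⌈y⌉₊ ↔ x < a ∧ (a : ℝ) < y := by
  rw [mem_Ioo, Nat.floor_lt hx, Nat.lt_ceil]

lemma sub_sub_one_le_card_Ioo_floor_ceil {x y : ℝ} (hx : 0 ≤ x) :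
    y - x - 1 ≤ #(Ioo ⌊x⌋₊ ⌈y⌉₊) := by
  have h : ⌈y⌉₊ ≤ #(Ioo ⌊x⌋₊ ⌈y⌉₊) + ⌊x⌋₊ + 1 := by rw [Nat.card_Ioo]; omega
  have h' : (⌈y⌉₊ : ℝ) ≤ #(Ioo ⌊x⌋₊ ⌈y⌉₊) + ⌊x⌋₊ + 1 := by exact_mod_cast h
  linarith [Nat.floor_le hx, Nat.le_ceil y]

lemma card_Ioo_floor_ceil_le {x y : ℝ} (hx : 0 ≤ x) (hxy : x ≤ y) :
    (#(Ioo ⌊x⌋₊ ⌈y⌉₊) : ℝ) ≤ y - x + 1 := by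
  rcases Nat.eq_zero_or_pos #(Ioo ⌊x⌋₊ ⌈y⌉₊) with h | h
  · rw [h, Nat.cast_zero]; linarith
  have h : #(Ioo ⌊x⌋₊ ⌈y⌉₊) + ⌊x⌋₊ + 1 = ⌈y⌉₊ := by rw [Nat.card_Ioo] at h ⊢; omega
  have h' : (#(Ioo ⌊x⌋₊ ⌈y⌉₊) : ℝ) + ⌊x⌋₊ + 1 = ⌈y⌉₊ := by exact_mod_cast h
  linarith [Nat.lt_floor_add_one x, Nat.ceil_lt_add_one (hx.trans hxy)]

lemma filter_dvd_Icc_eq_image {q : ℕ} (hq : 0 < q) (N : ℕ) :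
    (Icc 1 N).filter (q ∣ ·) = (Icc 1 (N / q)).image (q * ·) := by
  ext n
  simp only [mem_filter, mem_Icc, mem_image]
  constructor
  · rintro ⟨⟨hn, hnN⟩, m, rfl⟩
    exact ⟨m, ⟨Nat.pos_of_mul_pos_left hn, (Nat.le_div_iff_mul_le hq).mpr (by linarith)⟩, rfl⟩
  · rintro ⟨m, ⟨hm, hmN⟩, rfl⟩
    exact ⟨⟨Nat.mul_pos hq hm, by nlinarith [Nat.div_mul_le_self N q]⟩, dvd_mul_right q m⟩

lemma sum_Icc_one_natCast (K : ℕ) : ∑ m ∈ Icc 1 K, (m : ℝ) = K * (K + 1) / 2 := by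
  induction K with
  | zero => simp
  | succ K ih =>
    rw [sum_Icc_succ_top (by omega), ih]
    push_cast
    ring

lemma sum_Icc_filter_odd (M : ℕ) : ∑ m ∈ (Icc 1 M).filter Odd, m = ((M + 1) / 2) ^ 2 := by
  rw [sum_filter]
  induction M with
  | zero => simp
  | succ M ih =>
    rw [sum_Icc_succ_top (by omega), ih]
    rcases Nat.even_or_odd M with ⟨k, rfl⟩ | ⟨k, rfl⟩
    · rw [if_pos ⟨k, by ring⟩, show (k + k + 1 + 1) / 2 = k + 1 by omega,
        show (k + k + 1) / 2 = k by omega]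
      ring
    · rw [if_neg (by rw [Nat.not_odd_iff_even]; exact ⟨k + 1, by ring⟩),
        show (2 * k + 1 + 1 + 1) / 2 = k + 1 by omega, show (2 * k + 1 + 1) / 2 = k + 1 by omega,
        add_zero]

lemma sq_div_four_le_sum_Icc_filter_odd (M : ℕ) :
    (M : ℝ) ^ 2 / 4 ≤ ∑ m ∈ (Icc 1 M).filter Odd, (m : ℝ) := by
  have h : M ≤ 2 * ((M + 1) / 2) := by omega
  have h' : (M : ℝ) ≤ 2 * ((M + 1) / 2 : ℕ) := by exact_mod_cast h
  rw [← Nat.cast_sum, sum_Icc_filter_odd]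
  push_cast
  nlinarith [M.cast_nonneg (α := ℝ)]

lemma sum_Icc_filter_odd_le (M : ℕ) :
    ∑ m ∈ (Icc 1 M).filter Odd, (m : ℝ) ≤ ((M : ℝ) + 1) ^ 2 / 4 := by
  have h : 2 * ((M + 1) / 2) ≤ M + 1 := by omega
  have h' : 2 * (((M + 1) / 2 : ℕ) : ℝ) ≤ M + 1 := by exact_mod_cast h
  rw [← Nat.cast_sum, sum_Icc_filter_odd]
  push_cast
  nlinarith [((M + 1) / 2 : ℕ).cast_nonneg (α := ℝ)]

lemma sum_filter_odd_filter_dvd_le {d : ℕ} (hd : d ≠ 1) (N : ℕ) :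
    ∑ n ∈ ((Icc 1 N).filter Odd).filter (d ∣ ·), (n : ℝ) ≤ (N : ℝ) ^ 2 / 12 + 3 * N / 4 := by
  have hrhs : 0 ≤ (N : ℝ) ^ 2 / 12 + 3 * N / 4 := by positivity
  rcases d.even_or_odd with hd' | hd'
  · rw [filter_false_of_mem fun n hn hdn ↦ ?_, sum_empty]
    · exact hrhs
    · exact Nat.not_even_iff_odd.mpr (mem_filter.mp hn).2 (hd'.trans_dvd hdn)
  have hd3 : 3 ≤ d := by obtain ⟨k, rfl⟩ := hd'; omega
  rw [filter_comm, filter_dvd_Icc_eq_image (by omega), filter_image,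
    sum_image (mul_right_injective₀ (by omega)).injOn,
    filter_congr fun m _ ↦ by rw [Nat.odd_mul, and_iff_right hd']]
  simp only [Nat.cast_mul, ← mul_sum]
  rcases Nat.eq_zero_or_pos (N / d) with hK | hK
  · rw [hK]; simpa using hrhs
  have hK' : (d : ℝ) * (N / d : ℕ) ≤ N := by exact_mod_cast Nat.mul_div_le N d
  have hdN : (d : ℝ) ≤ N := by
    have : d ≤ N := (Nat.div_pos_iff.mp hK).2
    exact_mod_cast this
  have hd3' : (3 : ℝ) ≤ d := by exact_mod_cast hd3
  calc (d : ℝ) * ∑ m ∈ (Icc 1 (N / d)).filter Odd, (m : ℝ)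
      ≤ d * (((N / d : ℕ) : ℝ) + 1) ^ 2 / 4 := by
        rw [mul_div_assoc]; gcongr; exact sum_Icc_filter_odd_le _
    _ ≤ (N : ℝ) ^ 2 / 12 + 3 * N / 4 := by
        have hKd : 3 * ((N / d : ℕ) : ℝ) ≤ N := by nlinarith
        nlinarith

lemma sum_filter_odd_filter_not_dvd_ge {p : ℕ} (hp : p ≠ 1) (N : ℕ) :
    (N : ℝ) ^ 2 / 6 - 3 * N / 4 ≤ ∑ n ∈ ((Icc 1 N).filter Odd).filter (¬ p ∣ ·), (n : ℝ) := by
  have := sum_filter_add_sum_filter_not ((Icc 1 N).filter Odd) (p ∣ ·) (fun n ↦ (n : ℝ))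
  linarith [sq_div_four_le_sum_Icc_filter_odd N, sum_filter_odd_filter_dvd_le hp N]

lemma sum_range_inv_sq_odd_le (J : ℕ) :
    ∑ j ∈ range J, (((2 * j + 3 : ℕ) : ℝ) ^ 2)⁻¹ ≤ 1 / 4 - 1 / (4 * (J + 1)) := by
  induction J with
  | zero => norm_num
  | succ J ih =>
    rw [sum_range_succ]
    have telescoping : 1 / (4 * ((J : ℝ) + 1)) - 1 / (4 * (J + 1 + 1))
        = (4 * ((J : ℝ) + 1) * (J + 2))⁻¹ := by
      field_simp
      ring
    have step : (((2 * J + 3 : ℕ) : ℝ) ^ 2)⁻¹ ≤ (4 * ((J : ℝ) + 1) * (J + 2))⁻¹ :=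
      inv_anti₀ (by positivity) (by push_cast; nlinarith)
    push_cast at ih step ⊢
    linarith

lemma sum_filter_odd_inv_sq_le (N : ℕ) :
    ∑ q ∈ (Icc 3 N).filter Odd, ((q : ℝ) ^ 2)⁻¹ ≤ 1 / 4 := by
  have hsub : (Icc 3 N).filter Odd ⊆ (range N).image (fun j : ℕ ↦ 2 * j + 3) := by
    intro q hq
    obtain ⟨hq, k, rfl⟩ := mem_filter.mp hq
    rw [mem_Icc] at hq
    exact mem_image.mpr ⟨k - 1, mem_range.mpr (by omega), by omega⟩
  calc _ ≤ ∑ q ∈ (range N).image (fun j : ℕ ↦ 2 * j + 3), ((q : ℝ) ^ 2)⁻¹ :=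
        sum_le_sum_of_subset_of_nonneg hsub fun _ _ _ ↦ by positivity
    _ ≤ 1 / 4 - 1 / (4 * (N + 1)) :=
        (sum_image fun _ _ _ _ h ↦ by simpa using h).trans_le (sum_range_inv_sq_odd_le N)
    _ ≤ 1 / 4 := by linarith [show 0 ≤ 1 / (4 * ((N : ℝ) + 1)) by positivity]

lemma sum_Icc_inv_le_two_sqrt (N : ℕ) : ∑ k ∈ Icc 1 N, (k : ℝ)⁻¹ ≤ 2 * √N := by
  rcases N.eq_zero_or_pos with rfl | hN
  · simp
  have h := harmonic_le_one_add_log N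
  rw [harmonic_eq_sum_Icc] at h
  push_cast at h
  have hlog : Real.log N = 2 * Real.log √N := by
    rw [Real.log_sqrt N.cast_nonneg]
    ring
  have := Real.log_le_sub_one_of_pos (Real.sqrt_pos.mpr (Nat.cast_pos.mpr hN))
  linarith

lemma card_le_card_filter_coprime_add_sum (s : Finset ℕ) {n : ℕ} (hn : n ≠ 0) :
    #s ≤ #(s.filter (·.Coprime n)) + ∑ q ∈ n.primeFactors, #(s.filter (q ∣ ·)) := by
  rw [← card_filter_add_card_filter_not (s := s) (p := (·.Coprime n))]
  gcongr
  refine (card_le_card fun a ha ↦ ?_).trans card_biUnion_le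
  obtain ⟨ha, hcop⟩ := mem_filter.mp ha
  obtain ⟨q, hq, hqa, hqn⟩ := Nat.Prime.not_coprime_iff_dvd.mp hcop
  exact mem_biUnion.mpr ⟨q, Nat.mem_primeFactors.mpr ⟨hq, hqn, hn⟩, mem_filter.mpr ⟨ha, hqa⟩⟩

lemma sum_filter_odd_sum_primeFactors_le {f : ℕ → ℝ} (hf : ∀ m, 0 ≤ f m) (N : ℕ) :
    ∑ n ∈ (Icc 1 N).filter Odd, ∑ q ∈ n.primeFactors, f (n / q)
      ≤ ∑ q ∈ (Icc 3 N).filter Odd, ∑ m ∈ Icc 1 (N / q), f m := by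
  rw [sum_comm' (t' := (Icc 3 N).filter Odd)
    (s' := fun q ↦ ((Icc 1 N).filter Odd).filter (q ∈ ·.primeFactors)) fun n q ↦ ?_]
  · gcongr with q hq
    have hq : 0 < q := by grind
    calc _ ≤ ∑ n ∈ (Icc 1 N).filter (q ∣ ·), f (n / q) :=
          sum_le_sum_of_subset_of_nonneg (fun n hn ↦ by
            simp only [mem_filter] at hn ⊢
            exact ⟨hn.1.1, Nat.dvd_of_mem_primeFactors hn.2⟩) fun _ _ _ ↦ hf _
      _ = _ := by
          rw [filter_dvd_Icc_eq_image hq, sum_image (mul_right_injective₀ hq.ne').injOn]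
          simp only [Nat.mul_div_cancel_left _ hq]
  · simp only [mem_filter, mem_Icc]
    constructor
    · rintro ⟨⟨hn, hodd⟩, hq⟩
      have hqp := Nat.prime_of_mem_primeFactors hq
      have hqn := Nat.dvd_of_mem_primeFactors hq
      have hqodd : Odd q := Odd.of_dvd_nat hodd hqn
      have := Nat.le_of_dvd hn.1 hqn
      have : q ≠ 1 := hqp.ne_one
      refine ⟨⟨⟨hn, hodd⟩, hq⟩, ⟨?_, by omega⟩, hqodd⟩
      obtain ⟨k, rfl⟩ := hqodd
      omega
    · exact fun h ↦ h.1

/-- The `a` with `α * m < a < β * m` when `0 ≤ α`; for `α < 0` the floor `⌊α * m⌋₊` clips the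
interval at `0`. -/
noncomputable def arcNumerators (α β : ℝ) (m : ℕ) : Finset ℕ := Ioo ⌊α * m⌋₊ ⌈β * m⌉₊

section arcNumerators

variable {α β : ℝ}

lemma mem_arcNumerators (hα : 0 ≤ α) {m a : ℕ} :
    a ∈ arcNumerators α β m ↔ α * m < a ∧ a < β * m :=
  mem_Ioo_floor_ceil (by positivity)

lemma card_filter_dvd_arcNumerators (hα : 0 ≤ α) {q : ℕ} (hq : 0 < q) (m : ℕ) :
    #((arcNumerators α β (q * m)).filter (q ∣ ·)) = #(arcNumerators α β m) := by
  rw [← card_image_of_injective (arcNumerators α β m) (mul_right_injective₀ hq.ne')]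
  congr 1
  ext a
  have hq' : (0 : ℝ) < q := by exact_mod_cast hq
  simp only [mem_filter, mem_image, mem_arcNumerators hα]
  constructor
  · rintro ⟨⟨h₁, h₂⟩, b, rfl⟩
    push_cast at h₁ h₂
    exact ⟨b, ⟨by nlinarith, by nlinarith⟩, rfl⟩
  · rintro ⟨b, ⟨h₁, h₂⟩, rfl⟩
    push_cast
    exact ⟨⟨by nlinarith, by nlinarith⟩, dvd_mul_right q b⟩

lemma sub_one_le_card_arcNumerators (hα : 0 ≤ α) (m : ℕ) :
    (β - α) * m - 1 ≤ #(arcNumerators α β m) := by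
  have := sub_sub_one_le_card_Ioo_floor_ceil (y := β * m) (by positivity : 0 ≤ α * m)
  rw [arcNumerators]
  linarith

lemma card_arcNumerators_le (hα : 0 ≤ α) (hαβ : α ≤ β) (m : ℕ) :
    (#(arcNumerators α β m) : ℝ) ≤ (β - α) * m + 1 := by
  have := card_Ioo_floor_ceil_le (by positivity : 0 ≤ α * m)
    (mul_le_mul_of_nonneg_right hαβ m.cast_nonneg)
  rw [arcNumerators]
  linarith

lemma sum_Icc_card_arcNumerators_le (hα : 0 ≤ α) (hαβ : α ≤ β) (hβ : β ≤ 1) (N q : ℕ) :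
    ∑ m ∈ Icc 1 (N / q), (#(arcNumerators α β m) : ℝ)
      ≤ (β - α) / 2 * N ^ 2 * ((q : ℝ) ^ 2)⁻¹ + 2 * N * (q : ℝ)⁻¹ := by
  set K := N / q
  have hK : (K : ℝ) ≤ N / q := Nat.cast_div_le
  calc _ ≤ ∑ m ∈ Icc 1 K, ((β - α) * m + 1) :=
        sum_le_sum fun m _ ↦ card_arcNumerators_le hα hαβ m
    _ = (β - α) / 2 * K ^ 2 + ((β - α) / 2 + 1) * K := by
        rw [sum_add_distrib, ← mul_sum, sum_Icc_one_natCast, sum_const, Nat.card_Icc, nsmul_one,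
          Nat.add_sub_cancel]
        ring
    _ ≤ (β - α) / 2 * (N / q) ^ 2 + 2 * (N / q) := by
        have := K.cast_nonneg (α := ℝ)
        gcongr
        linarith
    _ = _ := by ring

lemma sum_filter_odd_sum_card_arcNumerators_le (hα : 0 ≤ α) (hαβ : α ≤ β) (hβ : β ≤ 1)
    (N : ℕ) :
    ∑ q ∈ (Icc 3 N).filter Odd, ∑ m ∈ Icc 1 (N / q), (#(arcNumerators α β m) : ℝ)
      ≤ (β - α) * N ^ 2 / 8 + 4 * N * √N := by
  have hinv : ∑ q ∈ (Icc 3 N).filter Odd, (q : ℝ)⁻¹ ≤ 2 * √N :=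
    (sum_le_sum_of_subset_of_nonneg (fun q hq ↦ by grind) fun _ _ _ ↦ by positivity).trans
      (sum_Icc_inv_le_two_sqrt N)
  calc _ ≤ ∑ q ∈ (Icc 3 N).filter Odd,
          ((β - α) / 2 * N ^ 2 * ((q : ℝ) ^ 2)⁻¹ + 2 * N * (q : ℝ)⁻¹) :=
        sum_le_sum fun q _ ↦ sum_Icc_card_arcNumerators_le hα hαβ hβ N q
    _ ≤ (β - α) / 2 * N ^ 2 * (1 / 4) + 2 * N * (2 * √N) := by
        rw [sum_add_distrib, ← mul_sum, ← mul_sum]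
        have : 0 ≤ β - α := by linarith
        gcongr
        exact sum_filter_odd_inv_sq_le N
    _ = _ := by ring

lemma card_filter_coprime_arcNumerators_le_phiB {B : Set UnitAddCircle} (hα : 0 ≤ α)
    (hβ : β ≤ 1) (hB : ∀ t ∈ Set.Ioo α β, (t : UnitAddCircle) ∈ B) (n : ℕ) :
    #((arcNumerators α β n).filter (·.Coprime n)) ≤ phiB B n := by
  rw [phiB, ← Set.ncard_coe_finset]
  refine Set.ncard_le_ncard (fun a ha ↦ ?_)
    ((Set.finite_Icc 1 n).subset fun a ha ↦ ⟨ha.1, ha.2.1⟩)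
  obtain ⟨ha, hcop⟩ := mem_filter.mp ha
  obtain ⟨h₁, h₂⟩ := (mem_arcNumerators hα).mp ha
  have hn : (0 : ℝ) < n := Nat.cast_pos.mpr <| Nat.pos_of_ne_zero <| by
    rintro rfl
    rw [Nat.cast_zero, mul_zero] at h₂
    exact a.cast_nonneg.not_gt h₂
  have hαn : 0 ≤ α * n := by positivity
  refine ⟨?_, ?_, hcop, hB _ ⟨(lt_div_iff₀ hn).mpr h₁, (div_lt_iff₀ hn).mpr h₂⟩⟩
  · exact_mod_cast hαn.trans_lt h₁
  · exact_mod_cast h₂.le.trans (mul_le_of_le_one_left hn.le hβ)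

lemma card_arcNumerators_sub_sum_le_phiB {B : Set UnitAddCircle} (hα : 0 ≤ α)
    (hβ : β ≤ 1) (hB : ∀ t ∈ Set.Ioo α β, (t : UnitAddCircle) ∈ B) {n : ℕ} (hn : n ≠ 0) :
    (#(arcNumerators α β n) : ℝ) - ∑ q ∈ n.primeFactors, (#(arcNumerators α β (n / q)) : ℝ)
      ≤ phiB B n := by
  have key := card_le_card_filter_coprime_add_sum (arcNumerators α β n) hn
  rw [sum_congr rfl fun q hq ↦ ?_] at key
  · have := card_filter_coprime_arcNumerators_le_phiB hα hβ hB n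
    rw [sub_le_iff_le_add]
    exact_mod_cast key.trans (by gcongr)
  · obtain ⟨hq, hqn, -⟩ := Nat.mem_primeFactors.mp hq
    conv_lhs => rw [← Nat.mul_div_cancel' hqn]
    exact card_filter_dvd_arcNumerators hα hq.pos _

end arcNumerators

theorem sum_phiB_filter_odd_filter_not_dvd_ge {B : Set UnitAddCircle} {α β : ℝ} (hα : 0 ≤ α)
    (hαβ : α < β) (hβ : β ≤ 1) (hB : ∀ t ∈ Set.Ioo α β, (t : UnitAddCircle) ∈ B) {p : ℕ}
    (hp : p ≠ 1) (N : ℕ) :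
    (β - α) * N ^ 2 / 24 - 6 * N * √N
      ≤ ∑ n ∈ ((Icc 1 N).filter Odd).filter (¬ p ∣ ·), (phiB B n : ℝ) := by
  set F := ((Icc 1 N).filter Odd).filter (¬ p ∣ ·)
  set c : ℕ → ℝ := fun m ↦ #(arcNumerators α β m)
  have hF : #F ≤ N := (card_le_card ((filter_subset _ _).trans (filter_subset _ _))).trans
    (by simp)
  have hmain : (β - α) * ∑ n ∈ F, (n : ℝ) - #F ≤ ∑ n ∈ F, c n := by
    rw [mul_sum, ← nsmul_one, ← sum_const, ← sum_sub_distrib]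
    exact sum_le_sum fun n _ ↦ sub_one_le_card_arcNumerators hα n
  have herror : ∑ n ∈ F, ∑ q ∈ n.primeFactors, c (n / q)
      ≤ (β - α) * N ^ 2 / 8 + 4 * N * √N := by
    have hc : ∀ m, 0 ≤ c m := fun m ↦ Nat.cast_nonneg _
    calc _ ≤ ∑ n ∈ (Icc 1 N).filter Odd, ∑ q ∈ n.primeFactors, c (n / q) :=
          sum_le_sum_of_subset_of_nonneg (filter_subset _ _) fun _ _ _ ↦
            sum_nonneg fun _ _ ↦ hc _
      _ ≤ ∑ q ∈ (Icc 3 N).filter Odd, ∑ m ∈ Icc 1 (N / q), c m :=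
          sum_filter_odd_sum_primeFactors_le hc N
      _ ≤ _ := sum_filter_odd_sum_card_arcNumerators_le hα hαβ.le hβ N
  have hsieve : ∑ n ∈ F, (c n - ∑ q ∈ n.primeFactors, c (n / q)) ≤ ∑ n ∈ F, (phiB B n : ℝ) :=
    sum_le_sum fun n hn ↦ card_arcNumerators_sub_sum_le_phiB hα hβ hB
      (Nat.one_le_iff_ne_zero.mp (mem_Icc.mp (mem_filter.mp (mem_filter.mp hn).1).1).1)
  have hN : (N : ℝ) ≤ N * √N := by
    rcases N.eq_zero_or_pos with rfl | hN
    · simp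
    · exact le_mul_of_one_le_right N.cast_nonneg (Real.one_le_sqrt.mpr (by exact_mod_cast hN))
  have hFN : (#F : ℝ) ≤ N := by exact_mod_cast hF
  have hδN : (β - α) * N ≤ N := mul_le_of_le_one_left N.cast_nonneg (by linarith)
  have hsum := mul_le_mul_of_nonneg_left (sum_filter_odd_filter_not_dvd_ge hp N)
    (sub_nonneg.mpr hαβ.le)
  rw [sum_sub_distrib] at hsieve
  linarith

theorem statement14 (p : ℕ) (hp : p.Prime)
    (B : Set UnitAddCircle) (hB : ∃ x r, 0 < r ∧ B = Metric.ball x r) :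
    ∃ N₀ : ℕ, ∃ C : ℝ, 0 < C ∧ ∀ N ≥ N₀,
      C * (N : ℝ) ^ 2 ≤ ∑ n ∈ Finset.Icc 1 N, (if p ∣ n then 0 else (phiB B n : ℝ)) := by
  obtain ⟨x, r, hr, hBx⟩ := hB
  obtain ⟨α, β, hα, hαβ, hβ, hball⟩ := exists_Ioo_forall_coe_mem_ball x hr
  rw [← hBx] at hball
  have hδ : 0 < β - α := sub_pos.mpr hαβ
  refine ⟨⌈(288 / (β - α)) ^ 2⌉₊, (β - α) / 48, by positivity, fun N hN ↦ ?_⟩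
  have hsqrt : 288 ≤ (β - α) * √N := by
    rw [← div_le_iff₀' hδ]
    exact Real.le_sqrt_of_sq_le (Nat.ceil_le.mp hN)
  calc (β - α) / 48 * (N : ℝ) ^ 2 ≤ (β - α) * N ^ 2 / 24 - 6 * N * √N := by
        have h := mul_le_mul_of_nonneg_right hsqrt (mul_nonneg N.cast_nonneg (Real.sqrt_nonneg N))
        have hN2 : (β - α) * √N * (N * √N) = (β - α) * N ^ 2 := by
          rw [mul_mul_mul_comm, Real.mul_self_sqrt N.cast_nonneg]
          ring
        linarith
    _ ≤ ∑ n ∈ ((Icc 1 N).filter Odd).filter (¬ p ∣ ·), (phiB B n : ℝ) :=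
        sum_phiB_filter_odd_filter_not_dvd_ge hα hαβ hβ hball hp.ne_one N
    _ ≤ ∑ n ∈ (Icc 1 N).filter (¬ p ∣ ·), (phiB B n : ℝ) := by
        rw [filter_comm]
        exact sum_le_sum_of_subset_of_nonneg (filter_subset _ _) fun _ _ _ ↦ Nat.cast_nonneg _
    _ = _ := by simp_rw [sum_filter, ite_not]
end

section
/- Let p₁ and p₂ be distinct primes and let k be a positive integer. Suppose A ⊆ ℤ_{p₂} is a measurable set with μ_{p₂}(A) > 0. Then for every ε > 0 there exists c = c(ε) > 0 such that the set {α ∈ ℤ_{p₂} : α = α' + z for some α' ∈ A and some z ∈ ℤ with p₁^k ∣ z and |z| < c} has μ_{p₂}-measure at least 1 − ε. -/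
/-!
A set `A` of positive Haar measure has relative density `> 1 - ε` in some residue class
`F = toZModPow n ⁻¹' {j₀}`: otherwise outer regularity, together with the fact that a compact
set inside an open set `U` is covered by residue classes of one level lying in `U`, would give
`μ A ≤ (1 - ε) μ A`. As `p₁ ^ k` is a unit modulo `p₂ ^ n`, every residue class modulo `p₂ ^ n`
is `j₀ + z` with `p₁ ^ k ∣ z`; the `p₂ ^ n` translates `A ∩ F + z` are disjoint and together
have measure `> 1 - ε`, and only finitely many shifts `z` are used.
-/

open MeasureTheory

open Metric
open scoped ENNReal

theorem ZMod.exists_dvd_intCast_eq {m N : ℕ} (h : m.Coprime N) (y : ZMod N) :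
    ∃ z : ℤ, (m : ℤ) ∣ z ∧ (z : ZMod N) = y := by
  refine ⟨m * ZMod.cast (((ZMod.unitOfCoprime m h)⁻¹ : (ZMod N)ˣ) * y : ZMod N),
    dvd_mul_right _ _, ?_⟩
  rw [Int.cast_mul, ZMod.intCast_zmod_cast, Int.cast_natCast, ← ZMod.coe_unitOfCoprime m h,
    ← mul_assoc, Units.mul_inv, one_mul]

namespace PadicInt

variable {p : ℕ} [Fact p.Prime]

theorem toZModPow_eq_iff_norm_sub_le {n : ℕ} {x y : ℤ_[p]} :
    toZModPow n x = toZModPow n y ↔ ‖x - y‖ ≤ (p : ℝ) ^ (-(n : ℤ)) := by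
  rw [← sub_eq_zero, ← map_sub, ← RingHom.mem_ker, ker_toZModPow, norm_le_pow_iff_mem_span_pow]

theorem preimage_toZModPow_singleton (n : ℕ) (x : ℤ_[p]) :
    toZModPow n ⁻¹' {toZModPow n x} = closedBall x ((p : ℝ) ^ (-(n : ℤ))) := by
  ext y
  simp [toZModPow_eq_iff_norm_sub_le, dist_eq_norm]

theorem measurableSet_preimage_toZModPow_singleton (n : ℕ) (j : ZMod (p ^ n)) :
    MeasurableSet (toZModPow n ⁻¹' {j}) := by
  obtain ⟨x, rfl⟩ := ZMod.ringHom_surjective (toZModPow n) j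
  rw [preimage_toZModPow_singleton]
  exact measurableSet_closedBall

theorem preimage_intCast_add_preimage_toZModPow (n : ℕ) (w : ℤ) (j : ZMod (p ^ n)) :
    (fun y => (w : ℤ_[p]) + y) ⁻¹' (toZModPow n ⁻¹' {j}) = toZModPow n ⁻¹' {j - w} := by
  ext y
  simp [eq_sub_iff_add_eq, add_comm]

theorem exists_preimage_image_toZModPow_subset {K U : Set ℤ_[p]} (hK : IsCompact K)
    (hU : IsOpen U) (hKU : K ⊆ U) : ∃ n, toZModPow n ⁻¹' (toZModPow n '' K) ⊆ U := by
  obtain ⟨δ, hδ, hδU⟩ := hK.exists_thickening_subset_open hU hKU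
  obtain ⟨n, hn⟩ := exists_pow_neg_lt p hδ
  refine ⟨n, fun y ⟨x, hxK, hxy⟩ => hδU (mem_thickening_iff.2 ⟨x, hxK, ?_⟩)⟩
  rw [dist_eq_norm]
  exact (toZModPow_eq_iff_norm_sub_le.1 hxy.symm).trans_lt hn

theorem measure_inter_preimage_toZModPow_le (μ : Measure ℤ_[p]) {A : Set ℤ_[p]} {r : ℝ≥0∞}
    {n : ℕ} (h : ∀ j, μ (A ∩ toZModPow n ⁻¹' {j}) ≤ r * μ (toZModPow n ⁻¹' {j}))
    (s : Set (ZMod (p ^ n))) : μ (A ∩ toZModPow n ⁻¹' s) ≤ r * μ (toZModPow n ⁻¹' s) := by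
  have hfib (j) (_ : j ∈ s) := measurableSet_preimage_toZModPow_singleton n j
  calc μ (A ∩ toZModPow n ⁻¹' s) ≤ μ.restrict A (toZModPow n ⁻¹' s) := by
        rw [Set.inter_comm]; exact Measure.le_restrict_apply _ _
    _ = ∑' j : s, μ.restrict A (toZModPow n ⁻¹' {(j : ZMod (p ^ n))}) :=
        (tsum_measure_preimage_singleton s.to_countable hfib).symm
    _ ≤ ∑' j : s, r * μ (toZModPow n ⁻¹' {(j : ZMod (p ^ n))}) := by
        refine ENNReal.tsum_le_tsum fun j => ?_
        rw [Measure.restrict_apply (hfib j j.2), Set.inter_comm]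
        exact h j
    _ = r * μ (toZModPow n ⁻¹' s) := by
        rw [ENNReal.tsum_mul_left, tsum_measure_preimage_singleton s.to_countable hfib]

theorem exists_lt_measure_inter_preimage_toZModPow (μ : Measure ℤ_[p]) [IsFiniteMeasure μ]
    {A : Set ℤ_[p]} (hA : MeasurableSet A) (hA₀ : μ A ≠ 0) {r : ℝ≥0∞} (hr : r < 1) :
    ∃ n j, r * μ (toZModPow n ⁻¹' {j}) < μ (A ∩ toZModPow n ⁻¹' {j}) := by
  by_contra! h
  have hU : ∀ U, A ⊆ U → IsOpen U → μ A ≤ r * μ U := by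
    intro U hAU hU
    rw [hA.measure_eq_iSup_isClosed_of_ne_top (measure_ne_top μ A)]
    refine iSup₂_le fun K hKA => iSup_le fun hK => ?_
    obtain ⟨n, hn⟩ := exists_preimage_image_toZModPow_subset hK.isCompact hU (hKA.trans hAU)
    calc μ K ≤ μ (A ∩ toZModPow n ⁻¹' (toZModPow n '' K)) :=
          measure_mono (Set.subset_inter hKA (Set.subset_preimage_image _ _))
      _ ≤ r * μ (toZModPow n ⁻¹' (toZModPow n '' K)) :=
          measure_inter_preimage_toZModPow_le μ (h n) _
      _ ≤ r * μ U := by gcongr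
  have : (r • μ).OuterRegular := .smul μ (hr.trans ENNReal.one_lt_top).ne
  have hle : μ A ≤ r * μ A := by
    calc μ A ≤ ⨅ (U : Set ℤ_[p]) (_ : A ⊆ U) (_ : IsOpen U), (r • μ) U :=
          le_iInf₂ fun U hAU => le_iInf (hU U hAU)
      _ = r * μ A := (A.measure_eq_iInf_isOpen (r • μ)).symm
  have hlt : r * μ A < μ A := by
    simpa [mul_comm] using ENNReal.mul_lt_mul_right hA₀ (measure_ne_top μ A) hr
  exact hle.not_gt hlt

instance : (muP p).IsAddLeftInvariant := by unfold muP; infer_instance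

instance : IsProbabilityMeasure (muP p) :=
  ⟨by rw [muP, ← TopologicalSpace.PositiveCompacts.coe_top]; exact Measure.addHaarMeasure_self⟩

theorem muP_preimage_toZModPow_singleton (n : ℕ) (j : ZMod (p ^ n)) :
    muP p (toZModPow n ⁻¹' {j}) = ((p ^ n : ℕ) : ℝ≥0∞)⁻¹ := by
  have heq (i : ZMod (p ^ n)) : muP p (toZModPow n ⁻¹' {i}) = muP p (toZModPow n ⁻¹' {j}) := by
    rw [← measure_preimage_add _ ((ZMod.cast (i - j) : ℤ) : ℤ_[p]),
      preimage_intCast_add_preimage_toZModPow, ZMod.intCast_zmod_cast, sub_sub_cancel]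
  have hsum := sum_measure_preimage_singleton (μ := muP p) Finset.univ
    fun i _ => measurableSet_preimage_toZModPow_singleton (p := p) n i
  simp only [heq, Finset.sum_const, Finset.card_univ, ZMod.card, nsmul_eq_mul, Finset.coe_univ,
    Set.preimage_univ, measure_univ] at hsum
  exact ENNReal.eq_inv_of_mul_eq_one_left (by rwa [mul_comm])

theorem le_muP_iUnion_preimage_add {n : ℕ} {A : Set ℤ_[p]} (hA : MeasurableSet A)
    {j₀ : ZMod (p ^ n)} {r : ℝ≥0∞}
    (hden : r * muP p (toZModPow n ⁻¹' {j₀}) ≤ muP p (A ∩ toZModPow n ⁻¹' {j₀}))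
    (z : ZMod (p ^ n) → ℤ) (hz : ∀ j, (z j : ZMod (p ^ n)) = j - j₀) :
    r ≤ muP p (⋃ j, (fun α => ((-z j : ℤ) : ℤ_[p]) + α) ⁻¹' (A ∩ toZModPow n ⁻¹' {j₀})) := by
  set F : ZMod (p ^ n) → Set ℤ_[p] := fun j => toZModPow n ⁻¹' {j}
  set s : ZMod (p ^ n) → Set ℤ_[p] := fun j =>
    (fun α => ((-z j : ℤ) : ℤ_[p]) + α) ⁻¹' (A ∩ F j₀)
  have hsF (j) : s j ⊆ F j := fun α hα => by
    have hj : j₀ - ((-z j : ℤ) : ZMod (p ^ n)) = j := by push_cast [hz]; ring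
    have hα' : α ∈ (fun α => ((-z j : ℤ) : ℤ_[p]) + α) ⁻¹' F j₀ := hα.2
    rwa [preimage_intCast_add_preimage_toZModPow, hj] at hα'
  have hs_meas (j) : MeasurableSet (s j) :=
    (hA.inter (measurableSet_preimage_toZModPow_singleton n j₀)).preimage (measurable_const_add _)
  have hp : ((p ^ n : ℕ) : ℝ≥0∞) ≠ 0 := by simp [(Fact.out : p.Prime).ne_zero]
  calc r = ∑ _j : ZMod (p ^ n), r * muP p (F j₀) := by
        rw [Finset.sum_const, Finset.card_univ, ZMod.card, nsmul_eq_mul,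
          muP_preimage_toZModPow_singleton, mul_left_comm,
          ENNReal.mul_inv_cancel hp (ENNReal.natCast_ne_top _), mul_one]
    _ ≤ ∑ j, muP p (s j) := by
        gcongr with j
        rwa [measure_preimage_add]
    _ = muP p (⋃ j, s j) := by
        rw [measure_iUnion (fun i j hij => ((Set.disjoint_singleton.2 hij).preimage _).mono
          (hsF i) (hsF j)) hs_meas, tsum_fintype]

end PadicInt

open PadicInt in
theorem statement16_general (p₁ p₂ : ℕ) [Fact p₁.Prime] [Fact p₂.Prime] (hne : p₁ ≠ p₂)
    (k : ℕ) (A : Set ℤ_[p₂]) (hA : MeasurableSet A) (hApos : 0 < muP p₂ A) :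
    ∀ ε > (0 : ℝ), ∃ c > (0 : ℝ),
      1 - ENNReal.ofReal ε ≤
        muP p₂ {α : ℤ_[p₂] | ∃ α' ∈ A, ∃ z : ℤ,
          (p₁ : ℤ) ^ k ∣ z ∧ |(z : ℝ)| < c ∧ α = α' + (z : ℤ_[p₂])} := by
  intro ε hε
  have hr : 1 - ENNReal.ofReal ε < 1 :=
    ENNReal.sub_lt_self ENNReal.one_ne_top one_ne_zero (by positivity)
  obtain ⟨n, j₀, hden⟩ := exists_lt_measure_inter_preimage_toZModPow _ hA hApos.ne' hr
  have hcop : (p₁ ^ k).Coprime (p₂ ^ n) :=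
    .pow _ _ ((Nat.coprime_primes Fact.out Fact.out).2 hne)
  choose z hz_dvd hz_cast using fun j => ZMod.exists_dvd_intCast_eq hcop (j - j₀)
  obtain ⟨M, hM⟩ := Finite.exists_le fun j => |(z j : ℝ)|
  refine ⟨M + 1, by linarith [(abs_nonneg _).trans (hM 0)], ?_⟩
  refine (le_muP_iUnion_preimage_add hA hden.le z hz_cast).trans <|
    measure_mono <| Set.iUnion_subset fun j α hα => ?_
  exact ⟨_, hα.1, z j, by exact_mod_cast hz_dvd j, (hM j).trans_lt (lt_add_one M),
    by push_cast; ring⟩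

theorem statement16 (p₁ p₂ : ℕ) [Fact p₁.Prime] [Fact p₂.Prime] (hne : p₁ ≠ p₂)
    (k : ℕ) (hk : 0 < k) (A : Set ℤ_[p₂]) (hA : MeasurableSet A) (hApos : 0 < muP p₂ A) :
    ∀ ε > (0 : ℝ), ∃ c > (0 : ℝ),
      1 - ENNReal.ofReal ε ≤
        muP p₂ {α : ℤ_[p₂] | ∃ α' ∈ A, ∃ z : ℤ,
          (p₁ : ℤ) ^ k ∣ z ∧ |(z : ℝ)| < c ∧ α = α' + (z : ℤ_[p₂])} :=
  statement16_general p₁ p₂ hne k A hA hApos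
end

section
/- Let p be a prime and let B ⊆ ℝ/ℤ be a ball (an open arc of positive length). Let ψ : ℝ_{>0} → ℝ_{>0} be monotonically decreasing and set Ψ(N) = Σ_{n=1}^N n·ψ(n). For α ∈ ℤ_p and N ∈ ℕ, let Δ_N(α) be the number of pairs (a,n) ∈ ℕ² with 1 ≤ n ≤ N, p ∤ n, 1 ≤ a ≤ n, gcd(a,n) = 1, a/n + ℤ ∈ B, and |n·α − a|_p < ψ(n). Then ∫_{ℤ_p} Δ_N(α)² dμ_p(α) ≤ Ψ(N) + 4·Ψ(N)². -/
open MeasureTheory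

/-- `Δ_N(α)`: the number of pairs `(a,n)` with `1 ≤ n ≤ N`, `p ∤ n`, `1 ≤ a ≤ n`,
`gcd(a,n) = 1`, `a/n + ℤ ∈ B`, and `|n·α - a|_p < ψ(n)`. -/
noncomputable def Delta (p : ℕ) [Fact p.Prime] (ψ : ℝ → ℝ) (B : Set UnitAddCircle)
    (N : ℕ) (α : ℤ_[p]) : ℕ :=
  Set.ncard {q : ℕ × ℕ | 1 ≤ q.2 ∧ q.2 ≤ N ∧ ¬ p ∣ q.2 ∧ 1 ≤ q.1 ∧ q.1 ≤ q.2 ∧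
    Nat.Coprime q.1 q.2 ∧ (((q.1 : ℝ) / (q.2 : ℝ)) : UnitAddCircle) ∈ B ∧
    ‖(q.2 : ℤ_[p]) * α - (q.1 : ℤ_[p])‖ < ψ (q.2 : ℝ)}

/-!
Write `Δ_N = ∑ 1_{E(a,n)}` over the reduced pairs `(a, n)`, where
`E(a,n) = {α : |nα - a|_p < ψ(n)}`, so that `∫ Δ_N² = ∑ μ(E(a,n) ∩ E(b,m))`. Since `p ∤ n`,
`E(a,n)` is a ball of radius `ψ(n)`, of measure at most `ψ(n)`; hence the diagonal contributes at
most `Ψ(N)`. If distinct reduced pairs with `n ≤ m` have a common point, then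
`|am - bn|_p < ψ(n)` because `ψ(m) ≤ ψ(n)`, that is `p^j ∣ am - bn ≠ 0` for some `j` with
`p^{-j} ≤ ψ(n)`, and at most `2nm p^{-j}` pairs `(a, b)` do so. Each such intersection has measure
at most `ψ(m)`, so the pairs with `n ≤ m` contribute at most `2Ψ(N)²`, and by symmetry the whole
off-diagonal at most `4Ψ(N)²`.
-/

open scoped ENNReal
open Finset

theorem Int.eq_of_dvd_sub_of_ediv_eq {a b e : ℤ} (h : e ∣ a - b) (h' : a / e = b / e) : a = b := by
  rw [← Int.mul_ediv_add_emod a e, ← Int.mul_ediv_add_emod b e, h',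
    (Int.modEq_iff_dvd.mpr h).eq]

theorem Int.dvd_sub_of_mul_sub_mul_eq {n m : ℕ} (hn : 0 < n) {a a' b b' : ℤ}
    (h : a * m - b * n = a' * m - b' * n) : ((n / n.gcd m : ℕ) : ℤ) ∣ a - a' := by
  have hd : (0 : ℤ) < n.gcd m := mod_cast Nat.gcd_pos_of_pos_left m hn
  have hcop : IsCoprime ((n / n.gcd m : ℕ) : ℤ) ((m / n.gcd m : ℕ) : ℤ) :=
    Nat.isCoprime_iff_coprime.mpr (Nat.coprime_div_gcd_div_gcd (Nat.gcd_pos_of_pos_left m hn))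
  refine hcop.dvd_of_dvd_mul_right ⟨b - b', mul_right_cancel₀ hd.ne' ?_⟩
  have hn' : ((n / n.gcd m : ℕ) : ℤ) * n.gcd m = n :=
    mod_cast Nat.div_mul_cancel (Nat.gcd_dvd_left n m)
  have hm' : ((m / n.gcd m : ℕ) : ℤ) * n.gcd m = m :=
    mod_cast Nat.div_mul_cancel (Nat.gcd_dvd_right n m)
  linear_combination (a - a') * hm' - (b - b') * hn' + h

theorem Int.abs_mul_sub_mul_le {a b n m : ℤ} (ha : 1 ≤ a) (ha' : a ≤ n) (hb : 1 ≤ b)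
    (hb' : b ≤ m) : |a * m - b * n| ≤ n * m - 1 := by
  rw [abs_le]
  constructor <;> nlinarith

theorem Int.abs_ediv_le_ediv_of_abs_le {x q L : ℤ} (hq : 0 < q) (hx : q ∣ x) (h : |x| ≤ L) :
    |x / q| ≤ L / q := by
  rw [Int.le_ediv_iff_mul_le hq]
  calc |x / q| * q = |x / q * q| := by rw [abs_mul, abs_of_pos hq]
    _ ≤ L := by rwa [Int.ediv_mul_cancel hx]

/-- The injection `(a, b) ↦ ((a m - b n) / (k d), (a - 1) / (n / d))`, `d = gcd n m`, shows that
at most `2 (n m - 1) / (k d)` values of `a m - b n` occur, each for at most `d` pairs. -/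
theorem card_filter_dvd_mul_sub_mul_mul_le {k n m : ℕ} (hk : k.Coprime n) (hn : 0 < n)
    (hm : 0 < m) :
    #{ab ∈ Icc 1 n ×ˢ Icc 1 m | (k : ℤ) ∣ ab.1 * m - ab.2 * n ∧ ab.1 * m ≠ ab.2 * n} * k ≤
      2 * n * m := by
  rcases k.eq_zero_or_pos with rfl | hk0
  · simp
  set T := {ab ∈ Icc 1 n ×ˢ Icc 1 m | (k : ℤ) ∣ ab.1 * m - ab.2 * n ∧ ab.1 * m ≠ ab.2 * n}
  set d := n.gcd m
  set e := n / d
  set q : ℤ := k * d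
  set M : ℤ := (n * m - 1) / q
  have hd : 0 < d := Nat.gcd_pos_of_pos_left m hn
  have hed : (e : ℤ) * d = n := mod_cast Nat.div_mul_cancel (Nat.gcd_dvd_left n m)
  have he : (0 : ℤ) < e :=
    Int.natCast_pos.mpr (Nat.div_pos (Nat.le_of_dvd hn (Nat.gcd_dvd_left n m)) hd)
  have hq : 0 < q := by positivity
  have hM : 0 ≤ M := Int.ediv_nonneg (by nlinarith) hq.le
  have hqdvd : ∀ ab ∈ T, q ∣ ab.1 * m - ab.2 * n := fun ab hab =>
    (Nat.isCoprime_iff_coprime.mpr (hk.coprime_dvd_right (Nat.gcd_dvd_left n m))).mul_dvd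
      (mem_filter.mp hab).2.1
      (dvd_sub ((Int.natCast_dvd_natCast.mpr (Nat.gcd_dvd_right n m)).mul_left _)
        ((Int.natCast_dvd_natCast.mpr (Nat.gcd_dvd_left n m)).mul_left _))
  set F : ℕ × ℕ → ℤ × ℤ := fun ab => ((ab.1 * m - ab.2 * n : ℤ) / q, (ab.1 - 1 : ℤ) / e)
  have hmaps : Set.MapsTo F T ((Icc (-M) M).erase 0 ×ˢ Ico 0 (d : ℤ) : Finset (ℤ × ℤ)) := by
    intro ab hab
    have hqab := hqdvd ab hab
    simp only [T, coe_filter, mem_product, mem_Icc, Set.mem_ofPred_eq] at hab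
    obtain ⟨⟨⟨ha1, ha2⟩, hb1, hb2⟩, -, hne⟩ := hab
    have habs := Int.abs_ediv_le_ediv_of_abs_le hq hqab (Int.abs_mul_sub_mul_le
      (mod_cast ha1) (mod_cast ha2) (mod_cast hb1) (mod_cast hb2))
    simp only [F, coe_product, coe_erase, coe_Icc, coe_Ico, Set.mem_prod, Set.mem_sdiff,
      Set.mem_Icc, Set.mem_Ico, Set.mem_singleton_iff]
    refine ⟨⟨abs_le.mp habs, fun h0 => hne ?_⟩, Int.ediv_nonneg (by omega) (by positivity), ?_⟩
    · have := Int.ediv_mul_cancel hqab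
      rw [h0, zero_mul, eq_comm, sub_eq_zero] at this
      exact_mod_cast this
    · rw [Int.ediv_lt_iff_lt_mul he]
      nlinarith
  have hinj : Set.InjOn F T := by
    intro ab hab ab' hab' hF
    simp only [F, Prod.mk.injEq] at hF
    have hx : (ab.1 * m - ab.2 * n : ℤ) = ab'.1 * m - ab'.2 * n := by
      rw [← Int.ediv_mul_cancel (hqdvd ab hab), ← Int.ediv_mul_cancel (hqdvd ab' hab'), hF.1]
    have ha : ab.1 = ab'.1 := by
      have := Int.eq_of_dvd_sub_of_ediv_eq
        (by rw [sub_sub_sub_cancel_right]; exact Int.dvd_sub_of_mul_sub_mul_eq hn hx) hF.2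
      omega
    have hb : (ab.2 : ℤ) * n = ab'.2 * n := by rw [ha] at hx; linarith
    exact Prod.ext ha (mod_cast mul_right_cancel₀ (b := (n : ℤ)) (by exact_mod_cast hn.ne') hb)
  have hcard := card_le_card_of_injOn F hmaps hinj
  rw [card_product, card_erase_of_mem (by simp [hM]), Int.card_Icc, Int.card_Ico] at hcard
  zify at hcard ⊢
  rw [show (((M + 1 - -M).toNat - 1 : ℕ) : ℤ) = 2 * M by omega, sub_zero,
    Int.toNat_natCast] at hcard
  calc (#T : ℤ) * k ≤ 2 * M * d * k := by gcongr
    _ = 2 * ((n * m - 1) / q * q) := by ring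
    _ ≤ 2 * (n * m - 1) := by gcongr; exact Int.ediv_mul_le _ hq.ne'
    _ ≤ 2 * n * m := by linarith

theorem Nat.mul_ne_mul_of_coprime {a b n m : ℕ} (ha : a.Coprime n) (hb : b.Coprime m) (hn : 0 < n)
    (h : (a, n) ≠ (b, m)) : a * m ≠ b * n := by
  intro hab
  have hnm : n = m := Nat.dvd_antisymm (ha.symm.dvd_of_dvd_mul_left ⟨b, by rw [hab, mul_comm]⟩)
    (hb.symm.dvd_of_dvd_mul_left ⟨a, by rw [← hab, mul_comm]⟩)
  subst hnm
  exact h (Prod.ext (Nat.eq_of_mul_eq_mul_right hn hab) rfl)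

theorem integral_sum_indicator_one_sq {Ω ι : Type*} [MeasurableSpace Ω] (μ : Measure Ω)
    [IsFiniteMeasure μ] (s : Finset ι) {E : ι → Set Ω} (hE : ∀ i, MeasurableSet (E i)) :
    ∫ x, (∑ i ∈ s, (E i).indicator (1 : Ω → ℝ) x) ^ 2 ∂μ =
      ∑ i ∈ s, ∑ j ∈ s, μ.real (E i ∩ E j) := by
  have hint (i j : ι) : Integrable ((E i ∩ E j).indicator (1 : Ω → ℝ)) μ :=
    (integrable_const 1).indicator ((hE i).inter (hE j))
  have hsq (x : Ω) : (∑ i ∈ s, (E i).indicator (1 : Ω → ℝ) x) ^ 2 =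
      ∑ i ∈ s, ∑ j ∈ s, (E i ∩ E j).indicator (1 : Ω → ℝ) x := by
    simp_rw [sq, sum_mul_sum, Set.inter_indicator_one, Pi.mul_apply]
  simp_rw [hsq]
  rw [integral_finsetSum _ fun i _ => integrable_finsetSum _ fun j _ => hint i j]
  simp_rw [integral_finsetSum _ fun j _ => hint _ j, integral_indicator_one ((hE _).inter (hE _))]

theorem sum_sum_le_sum_diag_add_two_mul_sum_ordered {ι α : Type*} [DecidableEq ι] [LinearOrder α]
    (s : Finset ι) (f : ι → α) {t : ι → ι → ℝ} (ht : ∀ i j, 0 ≤ t i j)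
    (hsymm : ∀ i j, t i j = t j i) :
    ∑ i ∈ s, ∑ j ∈ s, t i j ≤
      ∑ i ∈ s, t i i + 2 * ∑ i ∈ s, ∑ j ∈ s, if i ≠ j ∧ f i ≤ f j then t i j else 0 := by
  have key (i j : ι) : t i j ≤ (if i = j then t i j else 0) +
      (if i ≠ j ∧ f i ≤ f j then t i j else 0) + (if j ≠ i ∧ f j ≤ f i then t j i else 0) := by
    rw [hsymm j i]
    have := ht i j
    have := le_total (f i) (f j)
    split_ifs <;> grind
  calc ∑ i ∈ s, ∑ j ∈ s, t i j ≤ _ := sum_le_sum fun i _ => sum_le_sum fun j _ => key i j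
    _ = ∑ i ∈ s, t i i + ∑ i ∈ s, ∑ j ∈ s, (if i ≠ j ∧ f i ≤ f j then t i j else 0) +
          ∑ i ∈ s, ∑ j ∈ s, (if j ≠ i ∧ f j ≤ f i then t j i else 0) := by
      simp only [sum_add_distrib]
      congr 2
      exact sum_congr rfl fun i hi => by rw [sum_ite_eq, if_pos hi]
    _ = _ := by
      rw [sum_comm (γ := ι) (f := fun i j => if j ≠ i ∧ f j ≤ f i then t j i else 0)]
      ring

section Padic

variable {p : ℕ} [Fact p.Prime]

instance : IsProbabilityMeasure (muP p) :=
  ⟨by rw [muP, ← TopologicalSpace.PositiveCompacts.coe_top (α := ℤ_[p])]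
      exact Measure.addHaarMeasure_self⟩

instance inst_s19 : (muP p).IsAddLeftInvariant := Measure.isAddLeftInvariant_addHaarMeasure _

theorem PadicInt.exists_pow_neg_le_and_norm_le_of_norm_lt {r : ℝ} (hr : 0 < r) :
    ∃ j : ℕ, (p : ℝ) ^ (-(j : ℤ)) ≤ r ∧ ∀ x : ℤ_[p], ‖x‖ < r → ‖x‖ ≤ (p : ℝ) ^ (-(j : ℤ)) := by
  classical
  have h := PadicInt.exists_pow_neg_lt p hr
  refine ⟨Nat.find h, (Nat.find_spec h).le, fun x hx => ?_⟩
  rcases eq_or_ne x 0 with rfl | hx0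
  · rw [norm_zero]; positivity
  rw [PadicInt.norm_eq_zpow_neg_valuation hx0] at hx ⊢
  have hp : (1 : ℝ) ≤ p := mod_cast (Fact.out : p.Prime).one_le
  gcongr
  exact Nat.find_min' h hx

theorem muP_closedBall_zero_pow (j : ℕ) :
    muP p (Metric.closedBall 0 ((p : ℝ) ^ (-(j : ℤ)))) = ENNReal.ofReal ((p : ℝ) ^ (-(j : ℤ))) := by
  set H := (PadicInt.toZModPow (p := p) j).toAddMonoidHom.ker
  have hH : (H : Set ℤ_[p]) = Metric.closedBall 0 ((p : ℝ) ^ (-(j : ℤ))) := by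
    ext x
    rw [mem_closedBall_zero_iff, PadicInt.norm_le_pow_iff_mem_span_pow, ← PadicInt.ker_toZModPow]
    rfl
  have hindex : H.index = p ^ j := by
    rw [AddSubgroup.index_ker, AddMonoidHom.range_eq_top.mpr (ZMod.ringHom_surjective _)]
    simp
  have : H.FiniteIndex := ⟨by simp [hindex, (Fact.out : p.Prime).ne_zero]⟩
  have h := H.index_mul_measure (hH ▸ Metric.isClosed_closedBall.measurableSet) (muP p)
  rw [hindex, measure_univ, hH] at h
  push_cast at h
  have hp : (0 : ℝ) < p := mod_cast (Fact.out : p.Prime).pos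
  rw [ENNReal.eq_inv_of_mul_eq_one_left (a := muP p _) (by rwa [mul_comm]), zpow_neg,
    zpow_natCast, ENNReal.ofReal_inv_of_pos (by positivity), ENNReal.ofReal_pow (by positivity),
    ENNReal.ofReal_natCast]

theorem muP_ball_le (c : ℤ_[p]) (r : ℝ) : muP p (Metric.ball c r) ≤ ENNReal.ofReal r := by
  rcases le_or_gt r 0 with hr | hr
  · simp [Metric.ball_eq_empty.mpr hr]
  obtain ⟨j, hjr, hj⟩ := PadicInt.exists_pow_neg_le_and_norm_le_of_norm_lt (p := p) hr
  calc muP p (Metric.ball c r) ≤ muP p (Metric.closedBall c ((p : ℝ) ^ (-(j : ℤ)))) :=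
        measure_mono fun x hx => mem_closedBall_iff_norm.mpr (hj _ (mem_ball_iff_norm.mp hx))
    _ = muP p (Metric.closedBall 0 ((p : ℝ) ^ (-(j : ℤ)))) := by
        rw [← measure_vadd (muP p) c (Metric.closedBall 0 _), Metric.vadd_closedBall, vadd_eq_add,
          add_zero]
    _ ≤ ENNReal.ofReal r := (muP_closedBall_zero_pow j).trans_le (ENNReal.ofReal_le_ofReal hjr)

theorem muP_setOf_norm_mul_sub_lt_le {x : ℤ_[p]} (hx : ‖x‖ = 1) (c : ℤ_[p]) (r : ℝ) :
    muP p {α | ‖x * α - c‖ < r} ≤ ENNReal.ofReal r := by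
  obtain ⟨u, rfl⟩ := PadicInt.isUnit_iff.mpr hx
  have h : {α | ‖u * α - c‖ < r} = Metric.ball (↑u⁻¹ * c) r := by
    ext α
    rw [mem_ball_iff_norm, Set.mem_ofPred_eq, ← one_mul ‖α - _‖, ← hx, ← norm_mul, mul_sub,
      Units.mul_inv_cancel_left]
  rw [h]
  exact muP_ball_le _ _

theorem PadicInt.norm_mul_sub_mul_lt {a b n m α : ℤ_[p]} {r : ℝ} (ha : ‖n * α - a‖ < r)
    (hb : ‖m * α - b‖ < r) : ‖a * m - b * n‖ < r := by
  have h : a * m - b * n = n * (m * α - b) + -(m * (n * α - a)) := by ring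
  have hmul (x y : ℤ_[p]) : ‖x * y‖ ≤ ‖y‖ :=
    (norm_mul_le x y).trans (mul_le_of_le_one_left (norm_nonneg y) (PadicInt.norm_le_one x))
  rw [h]
  refine (PadicInt.nonarchimedean _ _).trans_lt (max_lt ((hmul _ _).trans_lt hb) ?_)
  exact (norm_neg _).trans_le (hmul _ _) |>.trans_lt ha

theorem card_filter_norm_mul_sub_mul_lt_le {n m : ℕ} (hpn : ¬ p ∣ n) (hn : 0 < n) (hm : 0 < m)
    {r : ℝ} (hr : 0 < r) :
    (#{ab ∈ Icc 1 n ×ˢ Icc 1 m | ‖(ab.1 : ℤ_[p]) * m - ab.2 * n‖ < r ∧ ab.1 * m ≠ ab.2 * n} : ℝ) ≤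
      2 * n * m * r := by
  obtain ⟨j, hjr, hj⟩ := PadicInt.exists_pow_neg_le_and_norm_le_of_norm_lt (p := p) hr
  have hdvd {a b : ℕ} (h : ‖(a : ℤ_[p]) * m - b * n‖ < r) :
      ((p ^ j : ℕ) : ℤ) ∣ a * m - b * n := by
    push_cast
    rw [← PadicInt.norm_int_le_pow_iff_dvd]
    push_cast
    exact hj _ h
  have hcount := card_filter_dvd_mul_sub_mul_mul_le
    (Nat.Coprime.pow_left j ((Nat.Prime.coprime_iff_not_dvd Fact.out).mpr hpn)) hn hm
  have hpj : (0 : ℝ) < (p : ℝ) ^ j := pow_pos (mod_cast (Fact.out : p.Prime).pos) j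
  calc _ ≤ (#{ab ∈ Icc 1 n ×ˢ Icc 1 m |
        ((p ^ j : ℕ) : ℤ) ∣ ab.1 * m - ab.2 * n ∧ ab.1 * m ≠ ab.2 * n} : ℝ) :=
        Nat.cast_le.mpr <| card_le_card fun ab hab => by
          rw [mem_filter] at hab ⊢
          exact ⟨hab.1, hdvd hab.2.1, hab.2.2⟩
    _ ≤ 2 * n * m * (p : ℝ) ^ (-(j : ℤ)) := by
        rw [zpow_neg, zpow_natCast, ← div_eq_mul_inv, le_div_iff₀ hpj]
        exact_mod_cast hcount
    _ ≤ 2 * n * m * r := by gcongr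

end Padic

section ReducedPairs

variable (p : ℕ) (B : Set UnitAddCircle) (N : ℕ)

open Classical in
noncomputable def reducedPairs : Finset (ℕ × ℕ) :=
  {q ∈ Icc 1 N ×ˢ Icc 1 N | ¬ p ∣ q.2 ∧ q.1 ≤ q.2 ∧ q.1.Coprime q.2 ∧
    (((q.1 : ℝ) / (q.2 : ℝ)) : UnitAddCircle) ∈ B}

variable {p B N}

theorem mem_reducedPairs {q : ℕ × ℕ} :
    q ∈ reducedPairs p B N ↔ 1 ≤ q.2 ∧ q.2 ≤ N ∧ ¬ p ∣ q.2 ∧ 1 ≤ q.1 ∧ q.1 ≤ q.2 ∧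
      q.1.Coprime q.2 ∧ (((q.1 : ℝ) / (q.2 : ℝ)) : UnitAddCircle) ∈ B := by
  simp only [reducedPairs, mem_filter, mem_product, mem_Icc]
  constructor
  · rintro ⟨⟨⟨ha, -⟩, hn, hnN⟩, hp, han, hcop, hB⟩
    exact ⟨hn, hnN, hp, ha, han, hcop, hB⟩
  · rintro ⟨hn, hnN, hp, ha, han, hcop, hB⟩
    exact ⟨⟨⟨ha, han.trans hnN⟩, hn, hnN⟩, hp, han, hcop, hB⟩

theorem sum_reducedPairs_le {g : ℕ × ℕ → ℝ} (hg : ∀ n ∈ Icc 1 N, ∀ a ∈ Icc 1 n, 0 ≤ g (a, n)) :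
    ∑ q ∈ reducedPairs p B N, g q ≤ ∑ n ∈ Icc 1 N, ∑ a ∈ Icc 1 n, g (a, n) := by
  have hU (q : ℕ × ℕ) : q ∈ {q ∈ Icc 1 N ×ˢ Icc 1 N | q.1 ≤ q.2} ↔
      q.2 ∈ Icc 1 N ∧ q.1 ∈ Icc 1 q.2 := by
    simp only [mem_filter, mem_product, mem_Icc]
    omega
  rw [← sum_finset_product_right' _ _ _ hU]
  refine sum_le_sum_of_subset_of_nonneg (fun q hq => ?_) (fun q hq _ => ?_)
  · obtain ⟨hn, hnN, -, ha, han, -⟩ := mem_reducedPairs.mp hq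
    simp only [mem_filter, mem_product, mem_Icc]
    exact ⟨⟨⟨ha, han.trans hnN⟩, hn, hnN⟩, han⟩
  · exact hg _ ((hU q).mp hq).1 _ ((hU q).mp hq).2

end ReducedPairs

section SecondMoment

variable (p : ℕ) [Fact p.Prime] (ψ : ℝ → ℝ)

def approxSet (q : ℕ × ℕ) : Set ℤ_[p] :=
  {α | ‖(q.2 : ℤ_[p]) * α - q.1‖ < ψ q.2}

noncomputable def collisionWeight (q q' : ℕ × ℕ) : ℝ :=
  if q.2 ≤ q'.2 ∧ ¬ p ∣ q.2 ∧ ‖(q.1 : ℤ_[p]) * q'.2 - q'.1 * q.2‖ < ψ q.2 ∧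
    q.1 * q'.2 ≠ q'.1 * q.2 then ψ q'.2 else 0

variable {p ψ} {B : Set UnitAddCircle} {N : ℕ}

theorem Delta_eq_sum_indicator (α : ℤ_[p]) :
    (Delta p ψ B N α : ℝ) = ∑ q ∈ reducedPairs p B N, (approxSet p ψ q).indicator 1 α := by
  classical
  have h : {q : ℕ × ℕ | 1 ≤ q.2 ∧ q.2 ≤ N ∧ ¬ p ∣ q.2 ∧ 1 ≤ q.1 ∧ q.1 ≤ q.2 ∧
      Nat.Coprime q.1 q.2 ∧ (((q.1 : ℝ) / (q.2 : ℝ)) : UnitAddCircle) ∈ B ∧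
      ‖(q.2 : ℤ_[p]) * α - (q.1 : ℤ_[p])‖ < ψ (q.2 : ℝ)} =
      ↑{q ∈ reducedPairs p B N | α ∈ approxSet p ψ q} := by
    ext q
    rw [mem_coe, mem_filter, mem_reducedPairs]
    simp only [approxSet, Set.mem_ofPred_eq, and_assoc]
  rw [Delta, h, Set.ncard_coe_finset, card_filter]
  push_cast
  simp [Set.indicator_apply]

theorem measurableSet_approxSet (q : ℕ × ℕ) : MeasurableSet (approxSet p ψ q) :=
  (isOpen_lt (by fun_prop) continuous_const).measurableSet

theorem muP_real_approxSet_le {q : ℕ × ℕ} (hq : ¬ p ∣ q.2) (hψ : 0 ≤ ψ q.2) :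
    (muP p).real (approxSet p ψ q) ≤ ψ q.2 :=
  ENNReal.toReal_le_of_le_ofReal hψ <| muP_setOf_norm_mul_sub_lt_le
    (PadicInt.norm_natCast_eq_one_iff.mpr ((Nat.Prime.coprime_iff_not_dvd Fact.out).mpr hq)) _ _

theorem sum_muP_real_approxSet_inter_self_le (hψ : ∀ x > (0 : ℝ), 0 < ψ x) :
    ∑ q ∈ reducedPairs p B N, (muP p).real (approxSet p ψ q ∩ approxSet p ψ q) ≤
      ∑ n ∈ Icc 1 N, (n : ℝ) * ψ n := by
  simp_rw [Set.inter_self]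
  calc _ ≤ ∑ q ∈ reducedPairs p B N, ψ q.2 := sum_le_sum fun q hq =>
          muP_real_approxSet_le (mem_reducedPairs.mp hq).2.2.1
            (hψ _ (Nat.cast_pos.mpr (mem_reducedPairs.mp hq).1)).le
    _ ≤ ∑ n ∈ Icc 1 N, ∑ a ∈ Icc 1 n, ψ n := sum_reducedPairs_le fun n hn _ _ =>
          (hψ _ (Nat.cast_pos.mpr (mem_Icc.mp hn).1)).le
    _ = ∑ n ∈ Icc 1 N, (n : ℝ) * ψ n := by simp

theorem muP_real_inter_le_collisionWeight (hψ : ∀ x > (0 : ℝ), 0 < ψ x)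
    (hψanti : AntitoneOn ψ (Set.Ioi 0)) {q q' : ℕ × ℕ} (hq : q ∈ reducedPairs p B N)
    (hq' : q' ∈ reducedPairs p B N) (hne : q ≠ q') (hle : q.2 ≤ q'.2) :
    (muP p).real (approxSet p ψ q ∩ approxSet p ψ q') ≤ collisionWeight p ψ q q' := by
  obtain ⟨hn, -, hpn, -, -, hcop, -⟩ := mem_reducedPairs.mp hq
  obtain ⟨hm, -, hpm, -, -, hcop', -⟩ := mem_reducedPairs.mp hq'
  have hψm : 0 < ψ q'.2 := hψ _ (by exact_mod_cast hm)
  by_cases hclose : ‖(q.1 : ℤ_[p]) * q'.2 - q'.1 * q.2‖ < ψ q.2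
  · rw [collisionWeight, if_pos ⟨hle, hpn, hclose, Nat.mul_ne_mul_of_coprime hcop hcop' hn hne⟩]
    exact (measureReal_mono Set.inter_subset_right).trans (muP_real_approxSet_le hpm hψm.le)
  · have hψle : ψ q'.2 ≤ ψ q.2 := hψanti (Set.mem_Ioi.mpr (by exact_mod_cast hn))
      (Set.mem_Ioi.mpr (by exact_mod_cast hm)) (by exact_mod_cast hle)
    have hempty : approxSet p ψ q ∩ approxSet p ψ q' = ∅ :=
      Set.eq_empty_of_forall_notMem fun α ⟨hα, hα'⟩ =>
        hclose (PadicInt.norm_mul_sub_mul_lt hα (hα'.trans_le hψle))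
    rw [collisionWeight, if_neg fun h => hclose h.2.2.1, hempty, measureReal_empty]

theorem collisionWeight_nonneg {q q' : ℕ × ℕ} (hψ : 0 ≤ ψ q'.2) : 0 ≤ collisionWeight p ψ q q' := by
  unfold collisionWeight
  split_ifs <;> simp [hψ]

theorem sum_sum_collisionWeight_le {n m : ℕ} (hn : 0 < n) (hm : 0 < m) (hψn : 0 < ψ n)
    (hψm : 0 ≤ ψ m) :
    ∑ a ∈ Icc 1 n, ∑ b ∈ Icc 1 m, collisionWeight p ψ (a, n) (b, m) ≤
      2 * (n * ψ n) * (m * ψ m) := by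
  by_cases h : n ≤ m ∧ ¬ p ∣ n
  · simp only [collisionWeight, h, not_false_eq_true, true_and]
    rw [← sum_product' (f := fun (a b : ℕ) => if ‖(a : ℤ_[p]) * m - b * n‖ < ψ n ∧ a * m ≠ b * n
      then ψ m else 0), sum_ite, sum_const_zero, add_zero, sum_const, nsmul_eq_mul]
    calc _ ≤ 2 * n * m * ψ n * ψ m := by
          gcongr
          exact card_filter_norm_mul_sub_mul_lt_le h.2 hn hm hψn
      _ = _ := by ring
  · simp only [collisionWeight]
    rw [sum_eq_zero fun a _ => sum_eq_zero fun b _ => if_neg fun h' => h ⟨h'.1, h'.2.1⟩]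
    positivity

theorem sum_sum_muP_real_inter_le (hψ : ∀ x > (0 : ℝ), 0 < ψ x)
    (hψanti : AntitoneOn ψ (Set.Ioi 0)) :
    ∑ q ∈ reducedPairs p B N, ∑ q' ∈ reducedPairs p B N,
      (if q ≠ q' ∧ q.2 ≤ q'.2 then (muP p).real (approxSet p ψ q ∩ approxSet p ψ q') else 0) ≤
      2 * (∑ n ∈ Icc 1 N, (n : ℝ) * ψ n) ^ 2 := by
  have hψIcc {n : ℕ} (hn : n ∈ Icc 1 N) : 0 < ψ n := hψ _ (by exact_mod_cast (mem_Icc.mp hn).1)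
  have hw {m : ℕ} (hm : m ∈ Icc 1 N) (q : ℕ × ℕ) (b : ℕ) : 0 ≤ collisionWeight p ψ q (b, m) :=
    collisionWeight_nonneg (hψIcc hm).le
  calc _ ≤ ∑ q ∈ reducedPairs p B N, ∑ q' ∈ reducedPairs p B N, collisionWeight p ψ q q' := by
        refine sum_le_sum fun q hq => sum_le_sum fun q' hq' => ?_
        have hψq' : 0 < ψ q'.2 := hψ _ (by exact_mod_cast (mem_reducedPairs.mp hq').1)
        split_ifs with h
        · exact muP_real_inter_le_collisionWeight hψ hψanti hq hq' h.1 h.2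
        · exact collisionWeight_nonneg hψq'.le
    _ ≤ ∑ q ∈ reducedPairs p B N, ∑ m ∈ Icc 1 N, ∑ b ∈ Icc 1 m, collisionWeight p ψ q (b, m) :=
        sum_le_sum fun q _ => sum_reducedPairs_le fun m hm b _ => hw hm q b
    _ ≤ ∑ n ∈ Icc 1 N, ∑ a ∈ Icc 1 n, ∑ m ∈ Icc 1 N, ∑ b ∈ Icc 1 m,
          collisionWeight p ψ (a, n) (b, m) :=
        sum_reducedPairs_le fun _ _ _ _ =>
          sum_nonneg fun m hm => sum_nonneg fun b _ => hw hm _ b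
    _ = ∑ n ∈ Icc 1 N, ∑ m ∈ Icc 1 N, ∑ a ∈ Icc 1 n, ∑ b ∈ Icc 1 m,
          collisionWeight p ψ (a, n) (b, m) := sum_congr rfl fun _ _ => sum_comm
    _ ≤ ∑ n ∈ Icc 1 N, ∑ m ∈ Icc 1 N, 2 * (n * ψ n) * (m * ψ m) := by
        gcongr with n hn m hm
        exact sum_sum_collisionWeight_le (mem_Icc.mp hn).1 (mem_Icc.mp hm).1 (hψIcc hn)
          (hψIcc hm).le
    _ = 2 * (∑ n ∈ Icc 1 N, (n : ℝ) * ψ n) ^ 2 := by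
        simp_rw [sq, sum_mul_sum, mul_sum, mul_assoc]

end SecondMoment

theorem statement19_general (p : ℕ) [Fact p.Prime]
    (B : Set UnitAddCircle)
    (ψ : ℝ → ℝ) (hψpos : ∀ x > (0 : ℝ), 0 < ψ x)
    (hψanti : AntitoneOn ψ (Set.Ioi 0)) (N : ℕ) :
    ∫ α, (Delta p ψ B N α : ℝ) ^ 2 ∂(muP p) ≤
      (∑ n ∈ Finset.Icc 1 N, (n : ℝ) * ψ n) +
        4 * (∑ n ∈ Finset.Icc 1 N, (n : ℝ) * ψ n) ^ 2 := by
  calc ∫ α, (Delta p ψ B N α : ℝ) ^ 2 ∂(muP p)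
      = ∑ q ∈ reducedPairs p B N, ∑ q' ∈ reducedPairs p B N,
          (muP p).real (approxSet p ψ q ∩ approxSet p ψ q') := by
        simp_rw [Delta_eq_sum_indicator]
        exact integral_sum_indicator_one_sq _ _ measurableSet_approxSet
    _ ≤ _ := sum_sum_le_sum_diag_add_two_mul_sum_ordered _ Prod.snd
        (fun _ _ => measureReal_nonneg) (fun _ _ => by rw [Set.inter_comm])
    _ ≤ (∑ n ∈ Icc 1 N, (n : ℝ) * ψ n) + 2 * (2 * (∑ n ∈ Icc 1 N, (n : ℝ) * ψ n) ^ 2) := by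
        gcongr
        · exact sum_muP_real_approxSet_inter_self_le hψpos
        · exact sum_sum_muP_real_inter_le hψpos hψanti
    _ = _ := by ring

theorem statement19 (p : ℕ) [Fact p.Prime]
    (B : Set UnitAddCircle) (hB : ∃ x r, 0 < r ∧ B = Metric.ball x r)
    (ψ : ℝ → ℝ) (hψpos : ∀ x > (0 : ℝ), 0 < ψ x)
    (hψanti : AntitoneOn ψ (Set.Ioi 0)) (N : ℕ) :
    ∫ α, (Delta p ψ B N α : ℝ) ^ 2 ∂(muP p) ≤
      (∑ n ∈ Finset.Icc 1 N, (n : ℝ) * ψ n) +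
        4 * (∑ n ∈ Finset.Icc 1 N, (n : ℝ) * ψ n) ^ 2 :=
  statement19_general p B ψ hψpos hψanti N
end
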